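/- arXiv:2010.11157 — 5 statements merged into one kernel-verified Lean document; each statement's English description precedes it below -/
import Mathlib

section
/- For integers k, n ≥ 2, the polynomial Nar_q(n,k) − q^{k−1}·Nar_q(n−1,k) + q^{k−2}·Nar_q(n−1,k−1) equals q^{k(k−2)}·(1+q^n)/[n+1]_q · qbinom(n+1,k) · qbinom(n−2,k−2). -/
open Finset

/-- The q-analog `[m]_q = 1 + q + ⋯ + q^(m-1)`. -/
noncomputable def qint (q : RatFunc ℚ) (m : ℕ) : RatFunc ℚ := ∑ i ∈ Finset.range m, q ^ i

/-- The q-factorial `[m]_q!`. -/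
noncomputable def qfact (q : RatFunc ℚ) (m : ℕ) : RatFunc ℚ := ∏ i ∈ Finset.range m, qint q (i + 1)

/-- The q-binomial coefficient, vanishing outside `0 ≤ k ≤ n`. -/
noncomputable def qbinom (q : RatFunc ℚ) (n k : ℕ) : RatFunc ℚ :=
  if k ≤ n then qfact q n / (qfact q k * qfact q (n - k)) else 0

/-- The q-Narayana number `Nar_q(n,k) = q^(k(k-1))/[n]_q · qbinom(n,k) · qbinom(n,k-1)`. -/
noncomputable def qNar (q : RatFunc ℚ) (n k : ℕ) : RatFunc ℚ :=
  q ^ (k * (k - 1)) / qint q n * qbinom q n k * qbinom q n (k - 1)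

lemma hXpow (m : ℕ) (hm : 1 ≤ m) : (RatFunc.X : RatFunc ℚ) ^ m - 1 ≠ 0 := by
  intro h
  have h2 : (RatFunc.X : RatFunc ℚ) ^ m = 1 := by linear_combination h
  have h3 : algebraMap (Polynomial ℚ) (RatFunc ℚ) (Polynomial.X ^ m) =
      algebraMap (Polynomial ℚ) (RatFunc ℚ) 1 := by
    simpa [map_pow, RatFunc.algebraMap_X] using h2
  have h4 := RatFunc.algebraMap_injective ℚ h3
  have := congrArg Polynomial.natDegree h4
  simp [Polynomial.natDegree_X_pow] at this
  omega

lemma qint_mul (m : ℕ) :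
    qint RatFunc.X m * (RatFunc.X - 1) = (RatFunc.X : RatFunc ℚ) ^ m - 1 :=
  geom_sum_mul _ _

lemma qint_eq (m : ℕ) :
    qint RatFunc.X m = ((RatFunc.X : RatFunc ℚ) ^ m - 1) / (RatFunc.X - 1) := by
  rw [eq_div_iff (by simpa using hXpow 1 le_rfl)]
  exact qint_mul m

lemma qint_ne (m : ℕ) (hm : 1 ≤ m) : qint RatFunc.X m ≠ 0 := by
  rw [qint_eq]
  exact div_ne_zero (hXpow m hm) (by simpa using hXpow 1 le_rfl)

lemma qfact_ne (m : ℕ) : qfact RatFunc.X m ≠ 0 :=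
  Finset.prod_ne_zero_iff.2 fun i _ => qint_ne (i + 1) (by omega)

lemma qfact_succ (q : RatFunc ℚ) (m : ℕ) : qfact q (m + 1) = qfact q m * qint q (m + 1) :=
  Finset.prod_range_succ _ _

lemma qfact_zero (q : RatFunc ℚ) : qfact q 0 = 1 := rfl

lemma qint_one (q : RatFunc ℚ) : qint q 1 = 1 := by simp [qint]

lemma qfact_one (q : RatFunc ℚ) : qfact q 1 = 1 := by
  rw [show (1 : ℕ) = 0 + 1 from rfl, qfact_succ, qfact_zero, one_mul, qint_one]

lemma qbinom_of_le {n k : ℕ} (h : k ≤ n) (q : RatFunc ℚ) :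
    qbinom q n k = qfact q n / (qfact q k * qfact q (n - k)) := if_pos h

lemma qbinom_of_gt {n k : ℕ} (h : n < k) (q : RatFunc ℚ) : qbinom q n k = 0 :=
  if_neg (by omega)

lemma core {F : Type*} [Field F] (q u v I2 I3 J1 J2 K1 K2 : F) (hq : q - 1 ≠ 0)
    (eI2 : I2 * (q - 1) = u * v * q ^ 2 - 1) (eI3 : I3 * (q - 1) = u * v * q ^ 3 - 1)
    (eJ1 : J1 * (q - 1) = u * q - 1) (eJ2 : J2 * (q - 1) = u * q ^ 2 - 1)
    (eK1 : K1 * (q - 1) = v * q - 1) (eK2 : K2 * (q - 1) = v * q ^ 2 - 1) :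
    q ^ 2 * u ^ 3 * (I2 * I3) - q ^ 3 * u ^ 4 * (K1 * K2) + u ^ 2 * (J1 * J2)
      = u ^ 2 * (1 + q ^ 3 * u * v) * (I3 * J1) := by
  have h2 : (q - 1) ^ 2 ≠ 0 := pow_ne_zero _ hq
  apply mul_right_cancel₀ h2
  linear_combination (q ^ 2 * u ^ 3 * I3 * (q - 1)) * eI2
    + (q ^ 2 * u ^ 3 * (u * v * q ^ 2 - 1)) * eI3
    - (q ^ 3 * u ^ 4 * K2 * (q - 1)) * eK1
    - (q ^ 3 * u ^ 4 * (v * q - 1)) * eK2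
    + (u ^ 2 * J2 * (q - 1)) * eJ1
    + (u ^ 2 * (u * q - 1)) * eJ2
    - (u ^ 2 * (1 + q ^ 3 * u * v) * J1 * (q - 1)) * eI3
    - (u ^ 2 * (1 + q ^ 3 * u * v) * (u * v * q ^ 3 - 1)) * eJ1

set_option maxHeartbeats 1000000

/-- For integers `k, n ≥ 2`,
`Nar_q(n,k) - q^(k-1) Nar_q(n-1,k) + q^(k-2) Nar_q(n-1,k-1)
  = q^(k(k-2)) (1+q^n)/[n+1]_q · qbinom(n+1,k) · qbinom(n-2,k-2)`. -/
theorem qNar_alternating_identity (n k : ℕ) (hn : 2 ≤ n) (hk : 2 ≤ k) :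
    qNar RatFunc.X n k - RatFunc.X ^ (k - 1) * qNar RatFunc.X (n - 1) k
      + RatFunc.X ^ (k - 2) * qNar RatFunc.X (n - 1) (k - 1)
    = RatFunc.X ^ (k * (k - 2)) * (1 + RatFunc.X ^ n) / qint RatFunc.X (n + 1)
        * qbinom RatFunc.X (n + 1) k * qbinom RatFunc.X (n - 2) (k - 2) := by
  have hX1 : (RatFunc.X : RatFunc ℚ) - 1 ≠ 0 := by simpa using hXpow 1 le_rfl
  rcases lt_or_ge n k with hlt | hle
  · rcases eq_or_lt_of_le (Nat.succ_le_of_lt hlt) with heq | hlt2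
    · -- k = n + 1 : everything vanishes
      obtain rfl : k = n + 1 := heq.symm
      simp only [qNar, qbinom_of_gt (show n < n + 1 by omega),
        qbinom_of_gt (show n - 1 < n + 1 by omega),
        qbinom_of_gt (show n - 1 < n + 1 - 1 by omega),
        qbinom_of_gt (show n - 2 < n + 1 - 2 by omega)]
      ring
    · -- k ≥ n + 2 : everything vanishes
      simp only [qNar, qbinom_of_gt (show n < k by omega),
        qbinom_of_gt (show n - 1 < k by omega),
        qbinom_of_gt (show n - 1 < k - 1 by omega),
        qbinom_of_gt (show n + 1 < k by omega)]
      ring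
  · rcases eq_or_lt_of_le hle with heq | hlt
    · -- k = n : boundary case
      obtain ⟨c, rfl, rfl⟩ : ∃ c, n = c + 2 ∧ k = c + 2 := ⟨n - 2, by omega, by omega⟩
      simp only [qNar, show c + 2 - 1 = c + 1 from rfl, show c + 2 - 2 = c from rfl,
        show c + 1 - 1 = c from rfl, show c + 2 + 1 = c + 3 from rfl,
        qbinom_of_gt (show c + 1 < c + 2 by omega),
        qbinom_of_le (show c + 2 ≤ c + 2 from le_rfl),
        qbinom_of_le (show c + 1 ≤ c + 2 by omega),
        qbinom_of_le (show c + 1 ≤ c + 1 from le_rfl),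
        qbinom_of_le (show c ≤ c + 1 by omega),
        qbinom_of_le (show c + 2 ≤ c + 3 by omega),
        qbinom_of_le (show c ≤ c from le_rfl),
        show c + 2 - (c + 2) = 0 by omega, show c + 2 - (c + 1) = 1 by omega,
        show c + 1 - (c + 1) = 0 by omega, show c + 1 - c = 1 by omega,
        show c + 3 - (c + 2) = 1 by omega, show c - c = 0 by omega]
      rw [show qfact RatFunc.X (c + 3)
          = qfact RatFunc.X (c + 2) * qint RatFunc.X (c + 3) from qfact_succ _ (c + 2),
        show qfact RatFunc.X (c + 2)
          = qfact RatFunc.X (c + 1) * qint RatFunc.X (c + 2) from qfact_succ _ (c + 1),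
        show qfact RatFunc.X (c + 1)
          = qfact RatFunc.X c * qint RatFunc.X (c + 1) from qfact_succ _ c]
      simp only [qfact_zero, qfact_one, mul_one, one_mul, mul_zero, zero_mul, sub_zero]
      simp only [div_div, div_mul_eq_mul_div, mul_div_assoc', div_mul_div_comm]
      have i1 : qint RatFunc.X (c + 1) ≠ 0 := qint_ne _ (by omega)
      have i2 : qint RatFunc.X (c + 2) ≠ 0 := qint_ne _ (by omega)
      have i3 : qint RatFunc.X (c + 3) ≠ 0 := qint_ne _ (by omega)
      have hB : qfact RatFunc.X c ≠ 0 := qfact_ne c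
      have hE1 : qint RatFunc.X (c + 2) * (qfact RatFunc.X c * qint RatFunc.X (c + 1)
          * qint RatFunc.X (c + 2)) * (qfact RatFunc.X c * qint RatFunc.X (c + 1)) ≠ 0 := by
        apply_rules [mul_ne_zero]
      have hE2 : qint RatFunc.X (c + 1) * (qfact RatFunc.X c * qint RatFunc.X (c + 1))
          * qfact RatFunc.X c ≠ 0 := by
        apply_rules [mul_ne_zero]
      have hE3 : qint RatFunc.X (c + 3) * (qfact RatFunc.X c * qint RatFunc.X (c + 1)
          * qint RatFunc.X (c + 2)) * qfact RatFunc.X c ≠ 0 := by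
        apply_rules [mul_ne_zero]
      rw [div_add_div _ _ hE1 hE2, div_eq_div_iff (mul_ne_zero hE1 hE2) hE3]
      ring
    · -- main case : 2 ≤ k ≤ n - 1
      obtain ⟨c, rfl⟩ : ∃ c, k = c + 2 := ⟨k - 2, by omega⟩
      obtain ⟨a, rfl⟩ : ∃ a, n = c + a + 3 := ⟨n - c - 3, by omega⟩
      simp only [qNar, show c + 2 - 1 = c + 1 from rfl, show c + 2 - 2 = c from rfl,
        show c + 1 - 1 = c from rfl,
        show c + a + 3 - 1 = c + a + 2 from rfl, show c + a + 3 - 2 = c + a + 1 from rfl,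
        show c + a + 3 + 1 = c + a + 4 from rfl,
        qbinom_of_le (show c + 2 ≤ c + a + 3 by omega),
        qbinom_of_le (show c + 1 ≤ c + a + 3 by omega),
        qbinom_of_le (show c + 2 ≤ c + a + 2 by omega),
        qbinom_of_le (show c + 1 ≤ c + a + 2 by omega),
        qbinom_of_le (show c ≤ c + a + 2 by omega),
        qbinom_of_le (show c + 2 ≤ c + a + 4 by omega),
        qbinom_of_le (show c ≤ c + a + 1 by omega),
        show c + a + 3 - (c + 2) = a + 1 by omega,
        show c + a + 3 - (c + 1) = a + 2 by omega,
        show c + a + 2 - (c + 2) = a by omega,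
        show c + a + 2 - (c + 1) = a + 1 by omega,
        show c + a + 2 - c = a + 2 by omega,
        show c + a + 4 - (c + 2) = a + 2 by omega,
        show c + a + 1 - c = a + 1 by omega]
      rw [show qfact RatFunc.X (c + a + 4)
          = qfact RatFunc.X (c + a + 3) * qint RatFunc.X (c + a + 4) from qfact_succ _ (c + a + 3),
        show qfact RatFunc.X (c + a + 3)
          = qfact RatFunc.X (c + a + 2) * qint RatFunc.X (c + a + 3) from qfact_succ _ (c + a + 2),
        show qfact RatFunc.X (c + a + 2)
          = qfact RatFunc.X (c + a + 1) * qint RatFunc.X (c + a + 2) from qfact_succ _ (c + a + 1),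
        show qfact RatFunc.X (c + 2)
          = qfact RatFunc.X (c + 1) * qint RatFunc.X (c + 2) from qfact_succ _ (c + 1),
        show qfact RatFunc.X (c + 1)
          = qfact RatFunc.X c * qint RatFunc.X (c + 1) from qfact_succ _ c,
        show qfact RatFunc.X (a + 2)
          = qfact RatFunc.X (a + 1) * qint RatFunc.X (a + 2) from qfact_succ _ (a + 1),
        show qfact RatFunc.X (a + 1)
          = qfact RatFunc.X a * qint RatFunc.X (a + 1) from qfact_succ _ a]
      have key := core RatFunc.X (RatFunc.X ^ c) (RatFunc.X ^ a)
        (qint RatFunc.X (c + a + 2)) (qint RatFunc.X (c + a + 3))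
        (qint RatFunc.X (c + 1)) (qint RatFunc.X (c + 2))
        (qint RatFunc.X (a + 1)) (qint RatFunc.X (a + 2)) hX1
        (by rw [qint_mul]; ring) (by rw [qint_mul]; ring) (by rw [qint_mul]; ring)
        (by rw [qint_mul]; ring) (by rw [qint_mul]; ring) (by rw [qint_mul]; ring)
      have hA : qfact RatFunc.X (c + a + 1) ≠ 0 := qfact_ne _
      have hB : qfact RatFunc.X c ≠ 0 := qfact_ne c
      have hC : qfact RatFunc.X a ≠ 0 := qfact_ne a
      have i1 : qint RatFunc.X (c + 1) ≠ 0 := qint_ne _ (by omega)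
      have i2 : qint RatFunc.X (c + 2) ≠ 0 := qint_ne _ (by omega)
      have i3 : qint RatFunc.X (a + 1) ≠ 0 := qint_ne _ (by omega)
      have i4 : qint RatFunc.X (a + 2) ≠ 0 := qint_ne _ (by omega)
      have i5 : qint RatFunc.X (c + a + 2) ≠ 0 := qint_ne _ (by omega)
      have i6 : qint RatFunc.X (c + a + 3) ≠ 0 := qint_ne _ (by omega)
      have i7 : qint RatFunc.X (c + a + 4) ≠ 0 := qint_ne _ (by omega)
      simp only [div_div, div_mul_eq_mul_div, mul_div_assoc', div_mul_div_comm]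
      have hD1 : qint RatFunc.X (c + a + 3) *
            (qfact RatFunc.X c * qint RatFunc.X (c + 1) * qint RatFunc.X (c + 2) *
              (qfact RatFunc.X a * qint RatFunc.X (a + 1))) *
            (qfact RatFunc.X c * qint RatFunc.X (c + 1) *
              (qfact RatFunc.X a * qint RatFunc.X (a + 1) * qint RatFunc.X (a + 2))) ≠ 0 := by
        apply_rules [mul_ne_zero]
      have hD2 : qint RatFunc.X (c + a + 2) *
            (qfact RatFunc.X c * qint RatFunc.X (c + 1) * qint RatFunc.X (c + 2) * qfact RatFunc.X a) *
            (qfact RatFunc.X c * qint RatFunc.X (c + 1) *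
              (qfact RatFunc.X a * qint RatFunc.X (a + 1))) ≠ 0 := by
        apply_rules [mul_ne_zero]
      have hD3 : qint RatFunc.X (c + a + 2) *
            (qfact RatFunc.X c * qint RatFunc.X (c + 1) *
              (qfact RatFunc.X a * qint RatFunc.X (a + 1))) *
            (qfact RatFunc.X c *
              (qfact RatFunc.X a * qint RatFunc.X (a + 1) * qint RatFunc.X (a + 2))) ≠ 0 := by
        apply_rules [mul_ne_zero]
      have hD4 : qint RatFunc.X (c + a + 4) *
            (qfact RatFunc.X c * qint RatFunc.X (c + 1) * qint RatFunc.X (c + 2) *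
              (qfact RatFunc.X a * qint RatFunc.X (a + 1) * qint RatFunc.X (a + 2))) *
            (qfact RatFunc.X c * (qfact RatFunc.X a * qint RatFunc.X (a + 1))) ≠ 0 := by
        apply_rules [mul_ne_zero]
      rw [div_sub_div _ _ hD1 hD2, div_add_div _ _ (mul_ne_zero hD1 hD2) hD3,
        div_eq_div_iff (mul_ne_zero (mul_ne_zero hD1 hD2) hD3) hD4]
      linear_combination (RatFunc.X ^ (c * c) * qfact RatFunc.X (c + a + 1) ^ 2
        * qint RatFunc.X (c + a + 2) ^ 3 * qint RatFunc.X (c + a + 3) * qint RatFunc.X (c + a + 4)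
        * qfact RatFunc.X c ^ 6 * qfact RatFunc.X a ^ 6 * qint RatFunc.X (c + 1) ^ 4
        * qint RatFunc.X (c + 2) ^ 2 * qint RatFunc.X (a + 1) ^ 5 * qint RatFunc.X (a + 2) ^ 2) * key
end

section
/- For 0 ≤ k ≤ n, the q-Narayana number Nar_q(n+1, k+1) equals the sum over pairs (e,l) with e+l = k of q^{e(e+1)+(n+1)l} · qbinom(n,2e) · Cat_q(e) · qbinom(n−2e, l). -/
open Finset

/-- MacMahon's q-Catalan number `Cat_q(n) = qbinom(2n,n)/[n+1]_q`. -/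
noncomputable def qCatalan (q : RatFunc ℚ) (n : ℕ) : RatFunc ℚ :=
  qbinom q (2 * n) n / qint q (n + 1)

namespace QAux
local notation "𝕏" => (RatFunc.X : RatFunc ℚ)

lemma X_pow_ne_one {m : ℕ} (hm : 0 < m) : 𝕏 ^ m ≠ 1 := by
  intro h
  have h2 : (Polynomial.X : Polynomial ℚ) ^ m = 1 := by
    apply RatFunc.algebraMap_injective ℚ
    simpa [map_pow, RatFunc.algebraMap_X] using h
  have h3 := congrArg (Polynomial.eval 2) h2
  simp only [Polynomial.eval_pow, Polynomial.eval_X, Polynomial.eval_one] at h3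
  have : (1:ℚ) < 2 ^ m := one_lt_pow₀ (by norm_num) hm.ne'
  rw [h3] at this
  exact lt_irrefl _ this

lemma X_sub_one_ne : 𝕏 - 1 ≠ 0 := by
  rw [sub_ne_zero]
  simpa using X_pow_ne_one (m := 1) one_pos

lemma qint_mul (m : ℕ) : qint 𝕏 m * (𝕏 - 1) = 𝕏 ^ m - 1 := geom_sum_mul _ m

lemma qint_eq (m : ℕ) : qint 𝕏 m = (𝕏 ^ m - 1) / (𝕏 - 1) := by
  rw [eq_div_iff X_sub_one_ne]; exact qint_mul m

lemma qint_ne_zero {m : ℕ} (hm : 0 < m) : qint 𝕏 m ≠ 0 := by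
  intro h
  have h2 := qint_mul m
  rw [h, zero_mul] at h2
  exact X_pow_ne_one hm (sub_eq_zero.mp h2.symm)

lemma X_pow_sub_one_ne {m : ℕ} (hm : 0 < m) : 𝕏 ^ m - 1 ≠ 0 := by
  rw [← qint_mul m]
  exact mul_ne_zero (qint_ne_zero hm) X_sub_one_ne

lemma qfact_zero : qfact 𝕏 0 = 1 := Finset.prod_range_zero _

lemma qfact_succ (m : ℕ) : qfact 𝕏 (m + 1) = qfact 𝕏 m * qint 𝕏 (m + 1) :=
  Finset.prod_range_succ _ m

lemma qfact_ne_zero (m : ℕ) : qfact 𝕏 m ≠ 0 := by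
  induction m with
  | zero => rw [qfact_zero]; exact one_ne_zero
  | succ m ih => rw [qfact_succ]; exact mul_ne_zero ih (qint_ne_zero m.succ_pos)

lemma qbinom_of_le {n k : ℕ} (h : k ≤ n) :
    qbinom 𝕏 n k = qfact 𝕏 n / (qfact 𝕏 k * qfact 𝕏 (n - k)) := if_pos h

lemma qbinom_of_lt {n k : ℕ} (h : n < k) : qbinom 𝕏 n k = 0 := if_neg (by omega)

lemma qint_zero : qint 𝕏 0 = 0 := Finset.sum_range_zero _

lemma qint_one : qint 𝕏 1 = 1 := by simp [qint]




lemma nar_closed (n k : ℕ) (hk : k ≤ n) :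
    𝕏 ^ ((k+1)*k) / qint 𝕏 (n+1) * qbinom 𝕏 (n+1) (k+1) * qbinom 𝕏 (n+1) k
      = 𝕏 ^ (k*(k+1)) * qbinom 𝕏 n k * qbinom 𝕏 (n+1) k / qint 𝕏 (k+1) := by
  obtain ⟨m, rfl⟩ : ∃ m, n = k + m := ⟨n - k, by omega⟩
  rw [qbinom_of_le (by omega : k+1 ≤ k+m+1), qbinom_of_le (by omega : k ≤ k+m+1),
    qbinom_of_le (by omega : k ≤ k+m)]
  have h1 : k + m + 1 - (k+1) = m := by omega
  have h2 : k + m + 1 - k = m + 1 := by omega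
  have h3 : k + m - k = m := by omega
  rw [h1, h2, h3, qfact_succ (k+m), qfact_succ k, qfact_succ m]
  have hXk := qfact_ne_zero k
  have hXm := qfact_ne_zero m
  have hc := qfact_ne_zero (k+m)
  have i1 := qint_ne_zero (m := k+m+1) (by omega)
  have i2 := qint_ne_zero (m := k+1) (by omega)
  have i3 := qint_ne_zero (m := m+1) (by omega)
  field_simp
  ring_nf



lemma term_eq (n k e : ℕ) (he : e ≤ k) (hk : k ≤ n) :
    qbinom 𝕏 n (2*e) * qCatalan 𝕏 e * qbinom 𝕏 (n - 2*e) (k-e)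
      = qbinom 𝕏 n (k+e) * qbinom 𝕏 k e * qbinom 𝕏 (k+e) e / qint 𝕏 (e+1) := by
  rcases le_or_gt (k+e) n with hle | hgt
  · obtain ⟨d, rfl⟩ : ∃ d, k = e + d := ⟨k - e, by omega⟩
    obtain ⟨m, rfl⟩ : ∃ m, n = 2*e + d + m := ⟨n - (2*e+d), by omega⟩
    rw [qCatalan]
    rw [qbinom_of_le (by omega : 2*e ≤ 2*e+d+m), qbinom_of_le (by omega : e ≤ 2*e),
      qbinom_of_le (by omega : e+d+e ≤ 2*e+d+m), qbinom_of_le (by omega : e ≤ e+d),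
      qbinom_of_le (by omega : e ≤ e+d+e)]
    rw [show 2*e+d+m - 2*e = d + m from by omega, show 2*e - e = e from by omega,
      show e+d - e = d from by omega, show 2*e+d+m - (e+d+e) = m from by omega,
      show e+d+e - e = e + d from by omega]
    rw [qbinom_of_le (by omega : d ≤ d+m), show d + m - d = m from by omega]
    have a1 := qfact_ne_zero e
    have a2 := qfact_ne_zero d
    have a3 := qfact_ne_zero m
    have a4 := qfact_ne_zero (2*e)
    have a5 := qfact_ne_zero (d+m)
    have a6 := qfact_ne_zero (e+d)
    have a7 := qfact_ne_zero (e+d+e)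
    have a8 := qfact_ne_zero (2*e+d+m)
    have i1 := qint_ne_zero (m := e+1) (by omega)
    simp only [div_mul_div_comm, div_mul_eq_mul_div, mul_div_assoc', div_div]
    rw [div_eq_div_iff (by simp [a1,a2,a3,a4,a5,a6,a7,a8,i1]) (by simp [a1,a2,a3,a4,a5,a6,a7,a8,i1])]
    ring
  · rw [qbinom_of_lt (by omega : n < k + e)]
    simp only [zero_mul, mul_zero, zero_div]
    rcases le_or_gt (2*e) n with h2 | h2
    · rw [qbinom_of_lt (by omega : n - 2*e < k - e), mul_zero]
    · rw [qbinom_of_lt (by omega : n < 2*e)]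
      simp only [zero_mul]



noncomputable def U (n k e : ℕ) : RatFunc ℚ :=
  𝕏 ^ (e*(e+1)+(n+1)*(k-e)) * qbinom 𝕏 n (k+e) * qbinom 𝕏 k e * qbinom 𝕏 (k+e) e
    / qint 𝕏 (e+1)

noncomputable def G (n k e : ℕ) : RatFunc ℚ :=
  -(𝕏 ^ (e*e+(n+1)*(k+1-e)) * qint 𝕏 e * qbinom 𝕏 (n+1) (k+e) * qbinom 𝕏 k e
      * qbinom 𝕏 (k+e) e / 𝕏 ^ e)

noncomputable def W (n k e : ℕ) : RatFunc ℚ :=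
  𝕏 ^ (e*(e+1)+(n+1)*(k-e)) * qbinom 𝕏 n (k+e) * qbinom 𝕏 k e * qbinom 𝕏 (k+e) e

lemma U_eq (n k e : ℕ) : U n k e = W n k e / qint 𝕏 (e+1) := rfl

lemma hUp (n k e : ℕ) (he : e ≤ k) (hn : k + e ≤ n) :
    U (n+1) k e
      = 𝕏^(k-e) * qint 𝕏 (n+1) * W n k e / (qint 𝕏 (e+1) * qint 𝕏 (n+1-(k+e))) := by
  obtain ⟨d, rfl⟩ : ∃ d, k = e + d := ⟨k-e, by omega⟩
  obtain ⟨m, rfl⟩ : ∃ m, n = 2*e+d+m := ⟨n-(2*e+d), by omega⟩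
  simp only [U, W]
  rw [show e+d-e = d from by omega, show 2*e+d+m+1-(e+d+e) = m+1 from by omega,
    qbinom_of_le (by omega : e+d+e ≤ 2*e+d+m+1), qbinom_of_le (by omega : e+d+e ≤ 2*e+d+m),
    show 2*e+d+m+1-(e+d+e) = m+1 from by omega, show 2*e+d+m-(e+d+e) = m from by omega,
    qfact_succ (2*e+d+m), qfact_succ m]
  have a1 := qfact_ne_zero (e+d+e)
  have a2 := qfact_ne_zero m
  have a3 := qfact_ne_zero (2*e+d+m)
  have i1 := qint_ne_zero (m := e+1) (by omega)
  have i2 := qint_ne_zero (m := m+1) (by omega)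
  simp only [div_mul_div_comm, div_mul_eq_mul_div, mul_div_assoc', div_div]
  rw [div_eq_div_iff (by simp [a1,a2,a3,i1,i2]) (by simp [a1,a2,a3,i1,i2])]
  ring

lemma hG1 (n k e : ℕ) (he : e ≤ k) (hn : k + e ≤ n) :
    G n k (e+1) = -(qint 𝕏 (n+1) * qint 𝕏 (k-e) * W n k e) / qint 𝕏 (e+1) := by
  rcases eq_or_lt_of_le he with rfl | hlt
  · simp only [G, W, qbinom_of_lt (by omega : e < e+1), show e-e = 0 from by omega, qint_zero]
    simp
  · obtain ⟨d, rfl⟩ : ∃ d, k = e + (d+1) := ⟨k-e-1, by omega⟩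
    obtain ⟨m, rfl⟩ : ∃ m, n = 2*e+d+1+m := ⟨n-(2*e+d+1), by omega⟩
    simp only [G, W]
    rw [show e+(d+1)-e = d+1 from by omega, show e+(d+1)+1-(e+1) = d+1 from by omega,
      qbinom_of_le (by omega : e+(d+1)+(e+1) ≤ 2*e+d+1+m+1),
      qbinom_of_le (by omega : e+1 ≤ e+(d+1)),
      qbinom_of_le (by omega : e+1 ≤ e+(d+1)+(e+1)),
      qbinom_of_le (by omega : e+(d+1)+e ≤ 2*e+d+1+m),
      qbinom_of_le (by omega : e ≤ e+(d+1)),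
      qbinom_of_le (by omega : e ≤ e+(d+1)+e)]
    rw [show 2*e+d+1+m+1-(e+(d+1)+(e+1)) = m from by omega,
      show e+(d+1)-(e+1) = d from by omega,
      show e+(d+1)+(e+1)-(e+1) = e+(d+1) from by omega,
      show 2*e+d+1+m-(e+(d+1)+e) = m from by omega,
      show e+(d+1)-e = d+1 from by omega,
      show e+(d+1)+e-e = e+(d+1) from by omega]
    rw [show e+(d+1)+(e+1) = (e+(d+1)+e)+1 from by omega, qfact_succ (e+(d+1)+e),
      qfact_succ e, qfact_succ d, qfact_succ (2*e+d+1+m)]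
    have a1 := qfact_ne_zero (e+(d+1)+e)
    have a2 := qfact_ne_zero m
    have a3 := qfact_ne_zero (2*e+d+1+m)
    have a4 := qfact_ne_zero e
    have a5 := qfact_ne_zero d
    have a6 := qfact_ne_zero (e+(d+1))
    have i1 := qint_ne_zero (m := e+1) (by omega)
    have i2 := qint_ne_zero (m := d+1) (by omega)
    have i3 := qint_ne_zero (m := e+(d+1)+e+1) (by omega)
    have hx : (𝕏 : RatFunc ℚ) ^ (e+1) ≠ 0 := pow_ne_zero _ RatFunc.X_ne_zero
    simp only [neg_div, neg_neg, div_mul_div_comm, div_mul_eq_mul_div, mul_div_assoc', div_div]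
    rw [neg_inj]
    rw [div_eq_div_iff (by simp [a1,a2,a3,a4,a5,a6,i1,i2,i3,hx]) (by simp [a1,a2,a3,a4,a5,a6,i1,i2,i3,hx])]
    ring

lemma hG0 (n k e : ℕ) (he : e ≤ k) (hn : k + e ≤ n) :
    G n k e = -(𝕏^(n+1) * qint 𝕏 e * qint 𝕏 (n+1) * W n k e)
        / (qint 𝕏 (n+1-(k+e)) * 𝕏^(2*e)) := by
  obtain ⟨d, rfl⟩ : ∃ d, k = e + d := ⟨k-e, by omega⟩
  obtain ⟨m, rfl⟩ : ∃ m, n = 2*e+d+m := ⟨n-(2*e+d), by omega⟩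
  simp only [G, W]
  rw [show e+d+1-e = d+1 from by omega, show e+d-e = d from by omega,
    show 2*e+d+m+1-(e+d+e) = m+1 from by omega,
    qbinom_of_le (by omega : e+d+e ≤ 2*e+d+m+1), qbinom_of_le (by omega : e+d+e ≤ 2*e+d+m),
    show 2*e+d+m+1-(e+d+e) = m+1 from by omega, show 2*e+d+m-(e+d+e) = m from by omega,
    qfact_succ (2*e+d+m), qfact_succ m]
  have a1 := qfact_ne_zero (e+d+e)
  have a2 := qfact_ne_zero m
  have a3 := qfact_ne_zero (2*e+d+m)
  have i2 := qint_ne_zero (m := m+1) (by omega)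
  have hx : (𝕏 : RatFunc ℚ) ^ e ≠ 0 := pow_ne_zero _ RatFunc.X_ne_zero
  have hx2 : (𝕏 : RatFunc ℚ) ^ (2*e) ≠ 0 := pow_ne_zero _ RatFunc.X_ne_zero
  simp only [neg_div, neg_neg, div_mul_div_comm, div_mul_eq_mul_div, mul_div_assoc', div_div]
  rw [neg_inj]
  rw [div_eq_div_iff (by simp [a1,a2,a3,i2,hx,hx2]) (by simp [a1,a2,a3,i2,hx,hx2])]
  ring

lemma star2 (e d m : ℕ) :
    𝕏^(2*e) * (𝕏^d * qint 𝕏 (e+m+1) * qint 𝕏 (e+m+2) - qint 𝕏 (2*e+d+m+2) * qint 𝕏 (m+1))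
      = 𝕏^(2*e+d+m+1) * qint 𝕏 e * qint 𝕏 (e+1) - 𝕏^(2*e) * qint 𝕏 d * qint 𝕏 (m+1) := by
  apply mul_right_cancel₀ (pow_ne_zero 2 X_sub_one_ne)
  linear_combination (𝕏^(2*e+d)*(𝕏-1)*qint 𝕏 (e+m+1)) * qint_mul (e+m+2)
    + (𝕏^(2*e+d)*(𝕏^(e+m+2)-1)) * qint_mul (e+m+1)
    - (𝕏^(2*e)*(𝕏-1)*qint 𝕏 (2*e+d+m+2)) * qint_mul (m+1)
    - (𝕏^(2*e)*(𝕏^(m+1)-1)) * qint_mul (2*e+d+m+2)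
    - (𝕏^(2*e+d+m+1)*(𝕏-1)*qint 𝕏 e) * qint_mul (e+1)
    - (𝕏^(2*e+d+m+1)*(𝕏^(e+1)-1)) * qint_mul e
    + (𝕏^(2*e)*(𝕏-1)*qint 𝕏 d) * qint_mul (m+1)
    + (𝕏^(2*e)*(𝕏^(m+1)-1)) * qint_mul d

set_option maxHeartbeats 1000000 in
lemma certD (n k e : ℕ) (he : e ≤ k) (hn : k + e ≤ n) :
    qint 𝕏 (n+1-k) * qint 𝕏 (n+2-k) * U (n+1) k e
      - qint 𝕏 (n+1) * qint 𝕏 (n+2) * U n k e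
      = G n k (e+1) - G n k e := by
  rw [hUp n k e he hn, hG1 n k e he hn, hG0 n k e he hn, U_eq]
  obtain ⟨d, rfl⟩ : ∃ d, k = e + d := ⟨k-e, by omega⟩
  obtain ⟨m, rfl⟩ : ∃ m, n = 2*e+d+m := ⟨n-(2*e+d), by omega⟩
  rw [show e+d-e = d from by omega, show 2*e+d+m+1-(e+d+e) = m+1 from by omega,
    show 2*e+d+m+1-(e+d) = e+m+1 from by omega,
    show 2*e+d+m+2-(e+d) = e+m+2 from by omega]
  have i1 := qint_ne_zero (m := e+1) (by omega)
  have i2 := qint_ne_zero (m := m+1) (by omega)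
  have hx : (𝕏 : RatFunc ℚ) ^ (2*e) ≠ 0 := pow_ne_zero _ RatFunc.X_ne_zero
  simp only [div_mul_div_comm, div_mul_eq_mul_div, mul_div_assoc', div_div]
  rw [div_sub_div _ _ (mul_ne_zero i1 i2) i1,
    div_sub_div _ _ i1 (mul_ne_zero i2 hx),
    div_eq_div_iff (by simp [i1,i2]) (by simp [i1,i2,hx])]
  linear_combination (qint 𝕏 (e+1) * qint 𝕏 (e+1) * qint 𝕏 (m+1) * qint 𝕏 (2*e+d+m+1)
    * W (2*e+d+m) (e+d) e) * star2 e d m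

set_option maxHeartbeats 2000000 in
lemma cert (n k e : ℕ) (hk : k ≤ n) :
    qint 𝕏 (n+1-k) * qint 𝕏 (n+2-k) * U (n+1) k e
      - qint 𝕏 (n+1) * qint 𝕏 (n+2) * U n k e
      = G n k (e+1) - G n k e := by
  rcases lt_or_ge k e with hA | he
  · -- case A : k < e
    rw [U, U, G, G, qbinom_of_lt hA, qbinom_of_lt (by omega : k < e+1)]
    simp
  rcases lt_or_ge (n+1) (k+e) with hB | hCD
  · -- case B : k+e ≥ n+2
    rw [U, U, G, G, qbinom_of_lt (by omega : n < k+e), qbinom_of_lt (by omega : n+1 < k+e),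
      qbinom_of_lt (by omega : n+1 < k+(e+1))]
    simp
  rcases eq_or_lt_of_le hCD with hC | hD
  · -- case C : k+e = n+1
    obtain ⟨e', rfl⟩ : ∃ e', e = e'+1 := ⟨e-1, by omega⟩
    obtain ⟨d, rfl⟩ : ∃ d, k = e'+1+d := ⟨k-(e'+1), by omega⟩
    obtain rfl : n = 2*e'+d+1 := by omega
    rw [U, U, G, G, qbinom_of_lt (by omega : 2*e'+d+1 < e'+1+d+(e'+1)),
      qbinom_of_lt (by omega : 2*e'+d+1+1 < e'+1+d+(e'+1+1))]
    rw [show 2*e'+d+1+1-(e'+1+d) = e'+1 from by omega,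
      show 2*e'+d+1+2-(e'+1+d) = e'+2 from by omega,
      show e'+1+d-(e'+1) = d from by omega,
      show e'+1+d+1-(e'+1) = d+1 from by omega]
    have i1 := qint_ne_zero (m := e'+1+1) (by omega)
    have hx : (𝕏:RatFunc ℚ) ^ (e'+1) ≠ 0 := pow_ne_zero _ RatFunc.X_ne_zero
    simp only [mul_zero, zero_mul, zero_div, neg_zero, zero_sub, sub_zero]
    simp only [neg_neg, mul_div_assoc', div_mul_eq_mul_div, div_mul_div_comm, div_div]
    rw [div_eq_div_iff i1 hx]
    ring
  · exact certD n k e he (by omega)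




lemma G_zero_left (n k : ℕ) : G n k 0 = 0 := by
  simp [G, qint_zero]

lemma G_zero_right (n k : ℕ) : G n k (k+1) = 0 := by
  rw [G, qbinom_of_lt (by omega : k < k+1)]
  simp

lemma qfact_one : qfact 𝕏 1 = 1 := by
  rw [show (1:ℕ) = 0+1 from rfl, qfact_succ 0, qfact_zero, qint_one, one_mul]

lemma step_closed (k m : ℕ) :
    qint 𝕏 (k+m+1) * qint 𝕏 (k+m+2)
        * (𝕏^(k*(k+1)) * qbinom 𝕏 (k+m) k * qbinom 𝕏 (k+m+1) k / qint 𝕏 (k+1))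
      = qint 𝕏 (m+1) * qint 𝕏 (m+2)
        * (𝕏^(k*(k+1)) * qbinom 𝕏 (k+m+1) k * qbinom 𝕏 (k+m+2) k / qint 𝕏 (k+1)) := by
  rw [qbinom_of_le (by omega : k ≤ k+m), qbinom_of_le (by omega : k ≤ k+m+1),
    qbinom_of_le (by omega : k ≤ k+m+2),
    show k+m-k = m from by omega, show k+m+1-k = m+1 from by omega,
    show k+m+2-k = m+2 from by omega,
    show k+m+2 = (k+m+1)+1 from by omega, show m+2 = (m+1)+1 from by omega,
    qfact_succ (k+m+1), qfact_succ (k+m), qfact_succ (m+1), qfact_succ m]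
  have a1 := qfact_ne_zero k
  have a2 := qfact_ne_zero m
  have a3 := qfact_ne_zero (k+m)
  have i1 := qint_ne_zero (m := k+1) (by omega)
  have i2 := qint_ne_zero (m := m+1) (by omega)
  have i3 := qint_ne_zero (m := m+1+1) (by omega)
  simp only [div_mul_div_comm, div_mul_eq_mul_div, mul_div_assoc', div_div]
  rw [div_eq_div_iff (by simp [a1,a2,a3,i1,i2,i3]) (by simp [a1,a2,a3,i1,i2,i3])]
  ring

lemma core (n k : ℕ) (hk : k ≤ n) :
    ∑ e ∈ Finset.range (k+1), U n k e
      = 𝕏^(k*(k+1)) * qbinom 𝕏 n k * qbinom 𝕏 (n+1) k / qint 𝕏 (k+1) := by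
  obtain ⟨m, rfl⟩ : ∃ m, n = k + m := ⟨n-k, by omega⟩
  clear hk
  induction m with
  | zero =>
    simp only [Nat.add_zero]
    rw [Finset.sum_eq_single 0]
    · rw [U]
      simp only [Nat.add_zero, Nat.sub_zero, Nat.zero_mul, Nat.mul_zero, Nat.zero_add]
      rw [qbinom_of_le (le_refl k), qbinom_of_le (by omega : 0 ≤ k),
        qbinom_of_le (by omega : k ≤ k+1),
        show k-k = 0 from by omega, show k-0 = k from by omega,
        show k+1-k = 1 from by omega,
        qfact_zero, qfact_one, qfact_succ k, qint_one]
      have a1 := qfact_ne_zero k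
      have i1 := qint_ne_zero (m := k+1) (by omega)
      simp only [div_mul_div_comm, div_mul_eq_mul_div, mul_div_assoc', div_div]
      rw [div_eq_div_iff (by simp [a1,i1]) (by simp [a1,i1])]
      ring
    · intro b _ hb0
      rw [U, qbinom_of_lt (by omega : k < k + b)]
      simp
    · intro h
      exact absurd (Finset.mem_range.mpr (by omega)) h
  | succ m ih =>
    have tele : ∑ e ∈ Finset.range (k+1), (G (k+m) k (e+1) - G (k+m) k e) = 0 := by
      rw [Finset.sum_range_sub (f := fun e => G (k+m) k e), G_zero_right, G_zero_left, sub_zero]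
    have ce : ∀ e, qint 𝕏 (m+1) * qint 𝕏 (m+2) * U (k+m+1) k e
        - qint 𝕏 (k+m+1) * qint 𝕏 (k+m+2) * U (k+m) k e
        = G (k+m) k (e+1) - G (k+m) k e := by
      intro e
      have h := cert (k+m) k e (by omega)
      rwa [show k+m+1-k = m+1 from by omega, show k+m+2-k = m+2 from by omega] at h
    have main : qint 𝕏 (m+1) * qint 𝕏 (m+2) * (∑ e ∈ Finset.range (k+1), U (k+m+1) k e)
        = qint 𝕏 (k+m+1) * qint 𝕏 (k+m+2) * (∑ e ∈ Finset.range (k+1), U (k+m) k e) := by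
      rw [Finset.mul_sum, Finset.mul_sum, ← sub_eq_zero, ← Finset.sum_sub_distrib]
      rw [Finset.sum_congr rfl (fun e _ => ce e), tele]
    have i1 := qint_ne_zero (m := m+1) (by omega)
    have i2 := qint_ne_zero (m := m+2) (by omega)
    apply mul_left_cancel₀ (mul_ne_zero i1 i2)
    show qint 𝕏 (m+1) * qint 𝕏 (m+2) * (∑ e ∈ Finset.range (k+1), U (k+m+1) k e) = _
    rw [main, ih, step_closed k m]
    rfl

lemma term_eq' (n k e : ℕ) (he : e ≤ k) (hk : k ≤ n) :
    𝕏 ^ (e * (e + 1) + (n + 1) * (k - e)) * qbinom 𝕏 n (2*e)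
        * qCatalan 𝕏 e * qbinom 𝕏 (n - 2*e) (k-e) = U n k e := by
  have h := term_eq n k e he hk
  rw [U_eq, W]
  linear_combination (𝕏 ^ (e * (e + 1) + (n + 1) * (k - e))) * h

theorem qNar_refinement' (n k : ℕ) (hk : k ≤ n) :
    qNar RatFunc.X (n + 1) (k + 1)
    = ∑ e ∈ Finset.range (k + 1),
        RatFunc.X ^ (e * (e + 1) + (n + 1) * (k - e)) * qbinom RatFunc.X n (2 * e)
          * qCatalan RatFunc.X e * qbinom RatFunc.X (n - 2 * e) (k - e) := by
  have h1 : qNar 𝕏 (n+1) (k+1)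
      = 𝕏^(k*(k+1)) * qbinom 𝕏 n k * qbinom 𝕏 (n+1) k / qint 𝕏 (k+1) := by
    simp only [qNar, Nat.add_sub_cancel]
    exact nar_closed n k hk
  rw [h1, ← core n k hk]
  exact Finset.sum_congr rfl
    (fun e he' => (term_eq' n k e (by have := Finset.mem_range.mp he'; omega) hk).symm)

end QAux

/-- For `0 ≤ k ≤ n`, `Nar_q(n+1,k+1)` equals the sum over pairs `(e,l)` with `e + l = k` of
`q^(e(e+1)+(n+1)l) qbinom(n,2e) Cat_q(e) qbinom(n-2e,l)`. -/
theorem qNar_refinement (n k : ℕ) (hk : k ≤ n) :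
    qNar RatFunc.X (n + 1) (k + 1)
    = ∑ e ∈ Finset.range (k + 1),
        RatFunc.X ^ (e * (e + 1) + (n + 1) * (k - e)) * qbinom RatFunc.X n (2 * e)
          * qCatalan RatFunc.X e * qbinom RatFunc.X (n - 2 * e) (k - e) :=
  QAux.qNar_refinement' n k hk
end

section
/- The number of triangulations of a regular n-gon with exactly k ears equals (n/k)·binom(n−4, 2k−4)·Cat(k−2)·2^{n−2k}, for integers n, k with 2 ≤ k ≤ n/2, where an ear is a triangle formed by three cyclically consecutive vertices. -/
open Finset

/-- The vertex `i + 2 (mod n)` of the `n`-gon. -/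
def rotTwo {n : ℕ} (i : Fin n) : Fin n :=
  ⟨(i.1 + 2) % n, Nat.mod_lt _ ((Nat.zero_le _).trans_lt i.isLt)⟩

/-- A diagonal of a convex `n`-gon with vertices `0, 1, …, n-1` in cyclic order:
an ordered pair `(a, b)` with `a < b` of non-adjacent vertices
(so `b ≥ a + 2` and `(a, b) ≠ (0, n-1)`). -/
def IsDiag {n : ℕ} (d : Fin n × Fin n) : Prop :=
  d.1.1 + 2 ≤ d.2.1 ∧ ¬(d.1.1 = 0 ∧ d.2.1 + 1 = n)

/-- Two diagonals (as sorted pairs) of a convex polygon cross iff their endpoints interlace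
in the cyclic order. -/
def Crosses {n : ℕ} (d e : Fin n × Fin n) : Prop :=
  (d.1 < e.1 ∧ e.1 < d.2 ∧ d.2 < e.2) ∨ (e.1 < d.1 ∧ d.1 < e.2 ∧ e.2 < d.2)

/-- A triangulation of a convex `n`-gon: a maximal set of pairwise non-crossing diagonals. -/
def IsTriangulation {n : ℕ} (T : Finset (Fin n × Fin n)) : Prop :=
  (∀ d ∈ T, IsDiag d) ∧ (∀ d ∈ T, ∀ e ∈ T, ¬Crosses d e) ∧
    (∀ d, IsDiag d → d ∉ T → ∃ e ∈ T, Crosses d e)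

/-- The short chord connecting `i` and `i + 2 (mod n)`, as a sorted pair. -/
def earDiag {n : ℕ} (i : Fin n) : Fin n × Fin n :=
  if i < rotTwo i then (i, rotTwo i) else (rotTwo i, i)

/-- The number of ears of a triangulation: the number of vertices `i` such that the triangle
on the cyclically consecutive vertices `i, i+1, i+2` is a triangle of the triangulation,
equivalently the short chord from `i` to `i+2 (mod n)` is one of its diagonals. -/
def ears {n : ℕ} (T : Finset (Fin n × Fin n)) : ℕ :=
  (Finset.univ.filter fun i : Fin n => earDiag i ∈ T).card

def NDiag (m : ℕ) (d : ℕ × ℕ) : Prop :=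
  d.1 + 2 ≤ d.2 ∧ d.2 < m ∧ ¬(d.1 = 0 ∧ d.2 + 1 = m)

instance (m : ℕ) (d : ℕ × ℕ) : Decidable (NDiag m d) := by unfold NDiag; infer_instance

def NCross (d e : ℕ × ℕ) : Prop :=
  (d.1 < e.1 ∧ e.1 < d.2 ∧ d.2 < e.2) ∨ (e.1 < d.1 ∧ d.1 < e.2 ∧ e.2 < d.2)

instance (d e : ℕ × ℕ) : Decidable (NCross d e) := by unfold NCross; infer_instance

def NTri (m : ℕ) (T : Finset (ℕ × ℕ)) : Prop :=
  (∀ d ∈ T, NDiag m d) ∧ (∀ d ∈ T, ∀ e ∈ T, ¬NCross d e) ∧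
    (∀ d, NDiag m d → d ∉ T → ∃ e ∈ T, NCross d e)

lemma ndiag_mem_range {m : ℕ} {d : ℕ × ℕ} (h : NDiag m d) :
    d ∈ Finset.range m ×ˢ Finset.range m := by
  obtain ⟨h1, h2, _⟩ := h
  simp only [Finset.mem_product, Finset.mem_range]
  omega

instance (m : ℕ) (T : Finset (ℕ × ℕ)) : Decidable (NTri m T) := by
  have : NTri m T ↔ (∀ d ∈ T, NDiag m d) ∧ (∀ d ∈ T, ∀ e ∈ T, ¬NCross d e) ∧
      (∀ d ∈ Finset.range m ×ˢ Finset.range m, NDiag m d → d ∉ T → ∃ e ∈ T, NCross d e) := by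
    unfold NTri
    refine and_congr_right fun _ => and_congr_right fun _ => ⟨fun h d _ => h d, fun h d hd => h d (ndiag_mem_range hd) hd⟩
  exact decidable_of_iff _ this.symm

/-- number of "linear ear" chords -/
def estat (T : Finset (ℕ × ℕ)) : ℕ := (T.filter (fun d => d.2 = d.1 + 2)).card

/-- cyclic ear chord at position i -/
def cchord (n i : ℕ) : ℕ × ℕ :=
  if i + 2 < n then (i, i + 2) else if i + 2 = n then (0, i) else (1, i)

def nears (n : ℕ) (T : Finset (ℕ × ℕ)) : ℕ :=
  ((Finset.range n).filter (fun i => cchord n i ∈ T)).card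

def allDiag (m : ℕ) : Finset (ℕ × ℕ) := (Finset.range m ×ˢ Finset.range m).filter (NDiag m)

def TriF (m : ℕ) : Finset (Finset (ℕ × ℕ)) := (allDiag m).powerset.filter (NTri m)

lemma mem_TriF {m : ℕ} {T : Finset (ℕ × ℕ)} : T ∈ TriF m ↔ NTri m T := by
  simp only [TriF, Finset.mem_filter, Finset.mem_powerset, and_iff_right_iff_imp]
  intro hT
  intro d hd
  exact Finset.mem_filter.2 ⟨ndiag_mem_range (hT.1 d hd), hT.1 d hd⟩

lemma ntri_small {m : ℕ} (hm : m ≤ 3) {T : Finset (ℕ × ℕ)} : NTri m T ↔ T = ∅ := by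
  constructor
  · intro hT
    refine Finset.eq_empty_of_forall_notMem fun d hd => ?_
    have := hT.1 d hd
    obtain ⟨h1, h2, h3⟩ := this
    rcases Nat.lt_or_ge d.1 1 with h | h
    · exact h3 ⟨by omega, by omega⟩
    · omega
  · rintro rfl
    refine ⟨by simp, by simp, fun d hd _ => absurd hd ?_⟩
    rintro ⟨h1, h2, h3⟩
    exact h3 ⟨by omega, by omega⟩

/-! ## Split vertex -/

def IsSplit (m : ℕ) (T : Finset (ℕ × ℕ)) (j : ℕ) : Prop :=
  1 ≤ j ∧ j ≤ m - 2 ∧ ((0, j) ∈ T ∨ j = 1) ∧ ((j, m - 1) ∈ T ∨ j = m - 2)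

def sj (m : ℕ) (T : Finset (ℕ × ℕ)) : ℕ :=
  if h : (((Finset.range m).filter (fun v => (v, m - 1) ∈ T))).Nonempty
  then (((Finset.range m).filter (fun v => (v, m - 1) ∈ T))).min' h else m - 2

lemma isSplit_sj (hm : 4 ≤ m) (hT : NTri m T) : IsSplit m T (sj m T) := by
  classical
  set s := ((Finset.range m).filter (fun v => (v, m - 1) ∈ T)) with hs
  have hmem : ∀ v ∈ s, (v, m - 1) ∈ T := fun v hv => (Finset.mem_filter.1 hv).2
  have hbd : ∀ v, (v, m - 1) ∈ T → 1 ≤ v ∧ v ≤ m - 3 := by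
    intro v hv
    have := hT.1 _ hv
    obtain ⟨h1, h2, h3⟩ := this
    simp only at h1 h2 h3
    constructor
    · by_contra h
      exact h3 ⟨by omega, by omega⟩
    · omega
  by_cases h : s.Nonempty
  · have hj : sj m T = s.min' h := by rw [sj, dif_pos h]
    set j := s.min' h with hjdef
    have hjT : (j, m - 1) ∈ T := hmem _ (s.min'_mem h)
    have hjb := hbd _ hjT
    have hmin : ∀ v, (v, m - 1) ∈ T → j ≤ v := by
      intro v hv
      exact s.min'_le v (Finset.mem_filter.2 ⟨Finset.mem_range.2 (by have := hbd v hv; omega), hv⟩)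
    refine hj ▸ ⟨hjb.1, by omega, ?_, Or.inl hjT⟩
    by_cases hj1 : j = 1
    · exact Or.inr hj1
    have hjd : NDiag m (0, j) := ⟨by omega, by omega, by omega⟩
    left
    by_contra hnot
    obtain ⟨e, heT, hec⟩ := hT.2.2 _ hjd hnot
    rcases hec with ⟨ha, hb, hc⟩ | ⟨ha, hb, hc⟩
    · -- 0 < e.1 < j < e.2
      simp only at ha hb hc
      have he := hT.1 _ heT
      obtain ⟨g1, g2, g3⟩ := he
      by_cases hb2 : e.2 = m - 1
      · have : (e.1, m - 1) ∈ T := by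
          have : e = (e.1, m - 1) := by rw [← hb2]
          rwa [← this]
        have := hmin _ this
        omega
      · -- e crosses (j, m-1)
        exact hT.2.1 _ hjT _ heT (Or.inr ⟨by simpa using hb, by simpa using hc, by simp; omega⟩)
    · simp only at ha; omega
  · have hj : sj m T = m - 2 := by rw [sj, dif_neg h]
    have hnone : ∀ v, (v, m - 1) ∉ T := by
      intro v hv
      exact h ⟨v, Finset.mem_filter.2 ⟨Finset.mem_range.2 (by have := hbd v hv; omega), hv⟩⟩
    rw [hj]
    refine ⟨by omega, le_refl _, ?_, Or.inr rfl⟩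
    by_cases hj1 : m - 2 = 1
    · exact Or.inr hj1
    have hjd : NDiag m (0, m - 2) := ⟨by omega, by omega, by omega⟩
    left
    by_contra hnot
    obtain ⟨e, heT, hec⟩ := hT.2.2 _ hjd hnot
    have he := hT.1 _ heT
    obtain ⟨g1, g2, g3⟩ := he
    rcases hec with ⟨ha, hb, hc⟩ | ⟨ha, hb, hc⟩
    · simp only at ha hb hc
      have hb2 : e.2 = m - 1 := by omega
      exact hnone e.1 (by rwa [← hb2])
    · simp only at ha; omega

lemma isSplit_unique {j j' : ℕ} (hm : 4 ≤ m) (hT : NTri m T)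
    (h1 : IsSplit m T j) (h2 : IsSplit m T j') : j = j' := by
  by_contra hne
  wlog hlt : j < j' generalizing j j'
  · exact this h2 h1 (Ne.symm hne) (by omega)
  obtain ⟨ha1, ha2, ha3, ha4⟩ := h1
  obtain ⟨hb1, hb2, hb3, hb4⟩ := h2
  have hj'T : (0, j') ∈ T := by rcases hb3 with h | h; exact h; omega
  have hjT : (j, m - 1) ∈ T := by rcases ha4 with h | h; exact h; omega
  exact hT.2.1 _ hj'T _ hjT (Or.inl ⟨by simp; omega, by simp; omega, by simp; omega⟩)

lemma sj_eq_of_isSplit {j : ℕ} (hm : 4 ≤ m) (hT : NTri m T) (h : IsSplit m T j) :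
    sj m T = j :=
  isSplit_unique hm hT (isSplit_sj hm hT) h

lemma no_straddle {j : ℕ} (hm : 4 ≤ m) (hT : NTri m T) (h : IsSplit m T j) :
    ∀ d ∈ T, d.2 ≤ j ∨ j ≤ d.1 := by
  intro d hd
  by_contra hcon
  push_neg at hcon
  obtain ⟨hc1, hc2⟩ := hcon
  obtain ⟨h1, h2, h3⟩ := hT.1 _ hd
  obtain ⟨ha1, ha2, ha3, ha4⟩ := h
  rcases Nat.eq_zero_or_pos d.1 with hz | hz
  · -- d.1 = 0, so d.2 < m - 1, crosses (j, m-1)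
    have hd2 : d.2 + 1 ≠ m := fun hc => h3 ⟨hz, hc⟩
    have hjT : (j, m - 1) ∈ T := by rcases ha4 with h | h; exact h; omega
    exact hT.2.1 _ hd _ hjT (Or.inl ⟨by simp; omega, by simp; omega, by simp; omega⟩)
  · have hjT : (0, j) ∈ T := by rcases ha3 with h | h; exact h; omega
    exact hT.2.1 _ hjT _ hd (Or.inl ⟨by simp; omega, by simp; omega, by simp; omega⟩)

/-! ## Glue and parts -/

def shiftUp (j : ℕ) (S : Finset (ℕ × ℕ)) : Finset (ℕ × ℕ) :=
  S.image (fun d => (d.1 + j, d.2 + j))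

def rootSet (m j : ℕ) : Finset (ℕ × ℕ) :=
  (if j = 1 then ∅ else {(0, j)}) ∪ (if j = m - 2 then ∅ else {(j, m - 1)})

def glue (m j : ℕ) (S1 S2 : Finset (ℕ × ℕ)) : Finset (ℕ × ℕ) :=
  S1 ∪ shiftUp j S2 ∪ rootSet m j

def leftPart (j : ℕ) (T : Finset (ℕ × ℕ)) : Finset (ℕ × ℕ) :=
  T.filter (fun d => d.2 ≤ j ∧ ¬(d.1 = 0 ∧ d.2 = j))

def rightPart (m j : ℕ) (T : Finset (ℕ × ℕ)) : Finset (ℕ × ℕ) :=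
  (T.filter (fun d => j ≤ d.1 ∧ ¬(d.1 = j ∧ d.2 = m - 1))).image (fun d => (d.1 - j, d.2 - j))

section GlueLemmas

variable {m j : ℕ} {S1 S2 T : Finset (ℕ × ℕ)}

lemma mem_shiftUp {d : ℕ × ℕ} : d ∈ shiftUp j S2 ↔ ∃ e ∈ S2, (e.1 + j, e.2 + j) = d := by
  simp [shiftUp]

lemma mem_glue {d : ℕ × ℕ} : d ∈ glue m j S1 S2 ↔
    d ∈ S1 ∨ (∃ e ∈ S2, (e.1 + j, e.2 + j) = d) ∨ (d = (0, j) ∧ j ≠ 1) ∨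
      (d = (j, m - 1) ∧ j ≠ m - 2) := by
  simp only [glue, rootSet, Finset.mem_union, mem_shiftUp]
  constructor
  · rintro ((h | h) | h)
    · exact Or.inl h
    · exact Or.inr (Or.inl h)
    · rcases h with h | h
      · by_cases hj : j = 1
        · simp [hj] at h
        · simp [hj] at h; exact Or.inr (Or.inr (Or.inl ⟨h, hj⟩))
      · by_cases hj : j = m - 2
        · simp [hj] at h
        · simp [hj] at h; exact Or.inr (Or.inr (Or.inr ⟨h, hj⟩))
  · rintro (h | h | ⟨rfl, hj⟩ | ⟨rfl, hj⟩)
    · exact Or.inl (Or.inl h)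
    · exact Or.inl (Or.inr h)
    · exact Or.inr (Or.inl (by simp [hj]))
    · exact Or.inr (Or.inr (by simp [hj]))

/-- coordinate facts for members of glue -/
lemma glue_cases (hm : 4 ≤ m) (hj1 : 1 ≤ j) (hj2 : j ≤ m - 2)
    (hS1 : NTri (j + 1) S1) (hS2 : NTri (m - j) S2) {d : ℕ × ℕ}
    (hd : d ∈ glue m j S1 S2) :
    (d ∈ S1 ∧ d.1 + 2 ≤ d.2 ∧ d.2 ≤ j ∧ ¬(d.1 = 0 ∧ d.2 = j)) ∨
    ((∃ e ∈ S2, (e.1 + j, e.2 + j) = d) ∧ j ≤ d.1 ∧ d.1 + 2 ≤ d.2 ∧ d.2 ≤ m - 1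
        ∧ ¬(d.1 = j ∧ d.2 = m - 1)) ∨
    (d = (0, j) ∧ 2 ≤ j) ∨ (d = (j, m - 1) ∧ j ≤ m - 3) := by
  rcases mem_glue.1 hd with h | h | ⟨rfl, hj⟩ | ⟨rfl, hj⟩
  · obtain ⟨g1, g2, g3⟩ := hS1.1 _ h
    exact Or.inl ⟨h, g1, by omega, by
      rintro ⟨a, b⟩; exact g3 ⟨a, by omega⟩⟩
  · obtain ⟨e, he, hde⟩ := h
    obtain ⟨g1, g2, g3⟩ := hS2.1 _ he
    subst hde
    refine Or.inr (Or.inl ⟨⟨e, he, rfl⟩, ?_, ?_, ?_, ?_⟩)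
    · show j ≤ e.1 + j; omega
    · show e.1 + j + 2 ≤ e.2 + j; omega
    · show e.2 + j ≤ m - 1; omega
    · rintro ⟨ha, hb⟩
      replace ha : e.1 + j = j := ha
      replace hb : e.2 + j = m - 1 := hb
      exact g3 ⟨by omega, by omega⟩
  · exact Or.inr (Or.inr (Or.inl ⟨rfl, by omega⟩))
  · exact Or.inr (Or.inr (Or.inr ⟨rfl, by omega⟩))

lemma shiftUp_ncross {a b : ℕ × ℕ} (ha : j ≤ a.1 ∧ a.1 + 2 ≤ a.2)
    (hb : j ≤ b.1 ∧ b.1 + 2 ≤ b.2) :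
    NCross a b ↔ NCross (a.1 - j, a.2 - j) (b.1 - j, b.2 - j) := by
  simp only [NCross]; omega

lemma glue_tri (hm : 4 ≤ m) (hj1 : 1 ≤ j) (hj2 : j ≤ m - 2)
    (hS1 : NTri (j + 1) S1) (hS2 : NTri (m - j) S2) :
    NTri m (glue m j S1 S2) := by
  refine ⟨?_, ?_, ?_⟩
  · -- diagonals
    intro d hd
    rcases glue_cases hm hj1 hj2 hS1 hS2 hd with ⟨_, g1, g2, g3⟩ | ⟨_, g0, g1, g2, g3⟩
      | ⟨rfl, hg⟩ | ⟨rfl, hg⟩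
    · exact ⟨g1, by omega, by rintro ⟨a, b⟩; omega⟩
    · exact ⟨g1, by omega, by rintro ⟨a, b⟩; omega⟩
    · exact ⟨by simp; omega, by simp; omega, by simp; omega⟩
    · exact ⟨by simp; omega, by simp; omega, by simp; omega⟩
  · -- noncrossing
    intro d hd e he
    rcases glue_cases hm hj1 hj2 hS1 hS2 hd with ⟨hd', d1, d2, d3⟩ | ⟨⟨d', hd', hdd⟩, d0, d1, d2, d3⟩
      | ⟨rfl, hg⟩ | ⟨rfl, hg⟩ <;>
    rcases glue_cases hm hj1 hj2 hS1 hS2 he with ⟨he', e1, e2, e3⟩ | ⟨⟨e', he', hee⟩, e0, e1, e2, e3⟩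
      | ⟨rfl, hg'⟩ | ⟨rfl, hg'⟩
    · exact hS1.2.1 _ hd' _ he'
    · rintro (⟨h1, h2, h3⟩ | ⟨h1, h2, h3⟩) <;> omega
    · rintro (⟨h1, h2, h3⟩ | ⟨h1, h2, h3⟩) <;> simp at h1 h2 h3 <;> omega
    · rintro (⟨h1, h2, h3⟩ | ⟨h1, h2, h3⟩) <;> simp at h1 h2 h3 <;> omega
    · rintro (⟨h1, h2, h3⟩ | ⟨h1, h2, h3⟩) <;> omega
    · intro hc
      have p1 : d'.1 + j = d.1 := congrArg Prod.fst hdd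
      have p2 : d'.2 + j = d.2 := congrArg Prod.snd hdd
      have q1 : e'.1 + j = e.1 := congrArg Prod.fst hee
      have q2 : e'.2 + j = e.2 := congrArg Prod.snd hee
      refine hS2.2.1 _ hd' _ he' ?_
      simp only [NCross] at hc ⊢
      omega
    · rintro (⟨h1, h2, h3⟩ | ⟨h1, h2, h3⟩) <;> simp at h1 h2 h3 <;> omega
    · rintro (⟨h1, h2, h3⟩ | ⟨h1, h2, h3⟩) <;> simp at h1 h2 h3 <;> omega
    · rintro (⟨h1, h2, h3⟩ | ⟨h1, h2, h3⟩) <;> simp at h1 h2 h3 <;> omega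
    · rintro (⟨h1, h2, h3⟩ | ⟨h1, h2, h3⟩) <;> simp at h1 h2 h3 <;> omega
    · rintro (⟨h1, h2, h3⟩ | ⟨h1, h2, h3⟩) <;> simp at h1 h2 h3 <;> omega
    · rintro (⟨h1, h2, h3⟩ | ⟨h1, h2, h3⟩) <;> simp at h1 h2 h3 <;> omega
    · rintro (⟨h1, h2, h3⟩ | ⟨h1, h2, h3⟩) <;> simp at h1 h2 h3 <;> omega
    · rintro (⟨h1, h2, h3⟩ | ⟨h1, h2, h3⟩) <;> simp at h1 h2 h3 <;> omega
    · rintro (⟨h1, h2, h3⟩ | ⟨h1, h2, h3⟩) <;> simp at h1 h2 h3 <;> omega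
    · rintro (⟨h1, h2, h3⟩ | ⟨h1, h2, h3⟩) <;> simp at h1 h2 h3 <;> omega
  · -- maximality
    intro d hd hdn
    obtain ⟨hd1, hd2, hd3⟩ := hd
    by_cases hcase : d.2 ≤ j
    · -- left region
      have hne : ¬(d.1 = 0 ∧ d.2 = j) := by
        rintro ⟨ha, hb⟩
        exact hdn (mem_glue.2 (Or.inr (Or.inr (Or.inl ⟨by rw [← ha, ← hb], by omega⟩))))
      have hdiag : NDiag (j + 1) d := ⟨hd1, by omega, by rintro ⟨a, b⟩; exact hne ⟨a, by omega⟩⟩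
      have hdnotin : d ∉ S1 := fun hc => hdn (mem_glue.2 (Or.inl hc))
      obtain ⟨e, he, hce⟩ := hS1.2.2 _ hdiag hdnotin
      exact ⟨e, mem_glue.2 (Or.inl he), hce⟩
    · by_cases hcase2 : j ≤ d.1
      · -- right region
        push_neg at hcase
        have hne : ¬(d.1 = j ∧ d.2 = m - 1) := by
          rintro ⟨ha, hb⟩
          refine hdn (mem_glue.2 (Or.inr (Or.inr (Or.inr ⟨by rw [← ha, ← hb], by omega⟩))))
        have hdiag : NDiag (m - j) (d.1 - j, d.2 - j) := by
          refine ⟨?_, ?_, ?_⟩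
          · show d.1 - j + 2 ≤ d.2 - j; omega
          · show d.2 - j < m - j; omega
          · show ¬(d.1 - j = 0 ∧ d.2 - j + 1 = m - j)
            rintro ⟨u1, u2⟩
            exact hne ⟨by omega, by omega⟩
        have hdnotin : (d.1 - j, d.2 - j) ∉ S2 := by
          intro hc
          refine hdn (mem_glue.2 (Or.inr (Or.inl ⟨_, hc, ?_⟩)))
          exact Prod.ext_iff.2 ⟨show d.1 - j + j = d.1 by omega, show d.2 - j + j = d.2 by omega⟩
        obtain ⟨e, he, hce⟩ := hS2.2.2 _ hdiag hdnotin
        obtain ⟨g1, g2, g3⟩ := hS2.1 _ he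
        refine ⟨(e.1 + j, e.2 + j), mem_glue.2 (Or.inr (Or.inl ⟨e, he, rfl⟩)), ?_⟩
        simp only [NCross] at hce ⊢
        omega
      · -- straddling
        push_neg at hcase hcase2
        by_cases hz : d.1 = 0
        · have hb : d.2 < m - 1 := by
            rcases Nat.lt_or_ge d.2 (m - 1) with h | h
            · exact h
            · exfalso; exact hd3 ⟨hz, by omega⟩
          refine ⟨(j, m - 1), mem_glue.2 (Or.inr (Or.inr (Or.inr ⟨rfl, by omega⟩))), ?_⟩
          exact Or.inl ⟨by simp; omega, by simp; omega, by simp; omega⟩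
        · refine ⟨(0, j), mem_glue.2 (Or.inr (Or.inr (Or.inl ⟨rfl, by omega⟩))), ?_⟩
          exact Or.inr ⟨by simp; omega, by simp; omega, by simp; omega⟩

end GlueLemmas

section PartLemmas

variable {m j : ℕ} {S1 S2 T : Finset (ℕ × ℕ)}

lemma mem_leftPart {d : ℕ × ℕ} :
    d ∈ leftPart j T ↔ d ∈ T ∧ d.2 ≤ j ∧ ¬(d.1 = 0 ∧ d.2 = j) := by
  simp [leftPart, and_assoc]

lemma mem_rightPart {d : ℕ × ℕ} :
    d ∈ rightPart m j T ↔ ∃ e ∈ T, j ≤ e.1 ∧ ¬(e.1 = j ∧ e.2 = m - 1) ∧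
      (e.1 - j, e.2 - j) = d := by
  simp only [rightPart, Finset.mem_image, Finset.mem_filter]
  constructor
  · rintro ⟨e, ⟨he, h1, h2⟩, h3⟩; exact ⟨e, he, h1, h2, h3⟩
  · rintro ⟨e, he, h1, h2, h3⟩; exact ⟨e, ⟨he, h1, h2⟩, h3⟩

lemma left_tri (hm : 4 ≤ m) (hT : NTri m T) (hsp : IsSplit m T j) :
    NTri (j + 1) (leftPart j T) := by
  obtain ⟨hj1, hj2, hj3, hj4⟩ := hsp
  refine ⟨?_, ?_, ?_⟩
  · intro d hd
    obtain ⟨hdT, h1, h2⟩ := mem_leftPart.1 hd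
    obtain ⟨g1, g2, g3⟩ := hT.1 _ hdT
    exact ⟨g1, by omega, by rintro ⟨a, b⟩; exact h2 ⟨a, by omega⟩⟩
  · intro d hd e he
    exact hT.2.1 _ (mem_leftPart.1 hd).1 _ (mem_leftPart.1 he).1
  · intro d hd hdn
    obtain ⟨hd1, hd2, hd3⟩ := hd
    have hd2' : d.2 ≤ j := by omega
    have hne : ¬(d.1 = 0 ∧ d.2 = j) := by rintro ⟨a, b⟩; exact hd3 ⟨a, by omega⟩
    have hdiagm : NDiag m d := ⟨hd1, by omega, by rintro ⟨a, b⟩; omega⟩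
    have hdT : d ∉ T := fun hc => hdn (mem_leftPart.2 ⟨hc, hd2', hne⟩)
    obtain ⟨e, heT, hce⟩ := hT.2.2 _ hdiagm hdT
    obtain ⟨g1, g2, g3⟩ := hT.1 _ heT
    have hstr := no_straddle hm hT ⟨hj1, hj2, hj3, hj4⟩ _ heT
    have he2 : e.2 ≤ j := by
      rcases hstr with h | h
      · exact h
      · exfalso
        rcases hce with ⟨u1, u2, u3⟩ | ⟨u1, u2, u3⟩ <;> omega
    have hene : ¬(e.1 = 0 ∧ e.2 = j) := by
      rintro ⟨a, b⟩
      rcases hce with ⟨u1, u2, u3⟩ | ⟨u1, u2, u3⟩ <;> omega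
    exact ⟨e, mem_leftPart.2 ⟨heT, he2, hene⟩, hce⟩

lemma right_tri (hm : 4 ≤ m) (hT : NTri m T) (hsp : IsSplit m T j) :
    NTri (m - j) (rightPart m j T) := by
  obtain ⟨hj1, hj2, hj3, hj4⟩ := hsp
  refine ⟨?_, ?_, ?_⟩
  · intro d hd
    obtain ⟨e, heT, h1, h2, h3⟩ := mem_rightPart.1 hd
    obtain ⟨g1, g2, g3⟩ := hT.1 _ heT
    subst h3
    refine ⟨?_, ?_, ?_⟩
    · show e.1 - j + 2 ≤ e.2 - j; omega
    · show e.2 - j < m - j; omega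
    · show ¬(e.1 - j = 0 ∧ e.2 - j + 1 = m - j)
      rintro ⟨u1, u2⟩
      exact h2 ⟨by omega, by omega⟩
  · intro d hd e he
    obtain ⟨d', hd'T, p1, p2, p3⟩ := mem_rightPart.1 hd
    obtain ⟨e', he'T, q1, q2, q3⟩ := mem_rightPart.1 he
    obtain ⟨g1, g2, g3⟩ := hT.1 _ hd'T
    obtain ⟨k1, k2, k3⟩ := hT.1 _ he'T
    have := hT.2.1 _ hd'T _ he'T
    subst p3; subst q3
    simp only [NCross] at this ⊢
    omega
  · intro d hd hdn
    obtain ⟨hd1, hd2, hd3⟩ := hd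
    have hdm : NDiag m (d.1 + j, d.2 + j) := by
      refine ⟨?_, ?_, ?_⟩
      · show d.1 + j + 2 ≤ d.2 + j; omega
      · show d.2 + j < m; omega
      · show ¬(d.1 + j = 0 ∧ d.2 + j + 1 = m)
        rintro ⟨u1, u2⟩; omega
    have hdT : (d.1 + j, d.2 + j) ∉ T := by
      intro hc
      refine hdn (mem_rightPart.2 ⟨_, hc, ?_, ?_, ?_⟩)
      · show j ≤ d.1 + j; omega
      · show ¬(d.1 + j = j ∧ d.2 + j = m - 1)
        rintro ⟨u1, u2⟩
        exact hd3 ⟨by omega, by omega⟩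
      · exact Prod.ext_iff.2 ⟨show d.1 + j - j = d.1 by omega, show d.2 + j - j = d.2 by omega⟩
    obtain ⟨e, heT, hce⟩ := hT.2.2 _ hdm hdT
    obtain ⟨g1, g2, g3⟩ := hT.1 _ heT
    have hstr := no_straddle hm hT ⟨hj1, hj2, hj3, hj4⟩ _ heT
    have he1 : j ≤ e.1 := by
      rcases hstr with h | h
      · exfalso
        rcases hce with ⟨u1, u2, u3⟩ | ⟨u1, u2, u3⟩ <;> simp only [NCross] at * <;> omega
      · exact h
    have hene : ¬(e.1 = j ∧ e.2 = m - 1) := by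
      rintro ⟨a, b⟩
      rcases hce with ⟨u1, u2, u3⟩ | ⟨u1, u2, u3⟩ <;> omega
    refine ⟨(e.1 - j, e.2 - j), mem_rightPart.2 ⟨e, heT, he1, hene, rfl⟩, ?_⟩
    rcases hce with ⟨u1, u2, u3⟩ | ⟨u1, u2, u3⟩
    · exact Or.inl ⟨by show e.1 - j > d.1; omega, by show e.1 - j < d.2; omega ,
        by show d.2 < e.2 - j; omega⟩
    · exact Or.inr ⟨by show e.1 - j < d.1; omega, by show d.1 < e.2 - j; omega,
        by show e.2 - j < d.2; omega⟩

lemma glue_parts (hm : 4 ≤ m) (hT : NTri m T) (hsp : IsSplit m T j) :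
    glue m j (leftPart j T) (rightPart m j T) = T := by
  obtain ⟨hj1, hj2, hj3, hj4⟩ := hsp
  ext d
  rw [mem_glue]
  constructor
  · rintro (h | ⟨e, he, hde⟩ | ⟨rfl, hj⟩ | ⟨rfl, hj⟩)
    · exact (mem_leftPart.1 h).1
    · obtain ⟨e', he'T, p1, p2, p3⟩ := mem_rightPart.1 he
      obtain ⟨g1, g2, g3⟩ := hT.1 _ he'T
      have : (e.1 + j, e.2 + j) = e' := by
        subst p3
        exact Prod.ext_iff.2 ⟨show e'.1 - j + j = e'.1 by omega, show e'.2 - j + j = e'.2 by omega⟩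
      rw [← hde, this]; exact he'T
    · rcases hj3 with h | h
      · exact h
      · omega
    · rcases hj4 with h | h
      · exact h
      · omega
  · intro hdT
    obtain ⟨g1, g2, g3⟩ := hT.1 _ hdT
    rcases no_straddle hm hT ⟨hj1, hj2, hj3, hj4⟩ _ hdT with h | h
    · by_cases he : d.1 = 0 ∧ d.2 = j
      · refine Or.inr (Or.inr (Or.inl ⟨Prod.ext_iff.2 ⟨he.1, he.2⟩, by omega⟩))
      · exact Or.inl (mem_leftPart.2 ⟨hdT, h, he⟩)
    · by_cases he : d.1 = j ∧ d.2 = m - 1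
      · refine Or.inr (Or.inr (Or.inr ⟨Prod.ext_iff.2 ⟨he.1, he.2⟩, by omega⟩))
      · refine Or.inr (Or.inl ⟨(d.1 - j, d.2 - j), mem_rightPart.2 ⟨d, hdT, h, he, rfl⟩, ?_⟩)
        exact Prod.ext_iff.2 ⟨show d.1 - j + j = d.1 by omega, show d.2 - j + j = d.2 by omega⟩

lemma leftPart_glue (hm : 4 ≤ m) (hj1 : 1 ≤ j) (hj2 : j ≤ m - 2)
    (hS1 : NTri (j + 1) S1) (hS2 : NTri (m - j) S2) :
    leftPart j (glue m j S1 S2) = S1 := by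
  ext d
  rw [mem_leftPart]
  constructor
  · rintro ⟨hd, h1, h2⟩
    rcases glue_cases hm hj1 hj2 hS1 hS2 hd with ⟨h, _⟩ | ⟨_, g0, g1, _⟩ | ⟨rfl, hg⟩ | ⟨rfl, hg⟩
    · exact h
    · omega
    · exact absurd ⟨rfl, rfl⟩ h2
    · simp only at h1; omega
  · intro hd
    obtain ⟨g1, g2, g3⟩ := hS1.1 _ hd
    exact ⟨mem_glue.2 (Or.inl hd), by omega, by rintro ⟨a, b⟩; exact g3 ⟨a, by omega⟩⟩

lemma rightPart_glue (hm : 4 ≤ m) (hj1 : 1 ≤ j) (hj2 : j ≤ m - 2)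
    (hS1 : NTri (j + 1) S1) (hS2 : NTri (m - j) S2) :
    rightPart m j (glue m j S1 S2) = S2 := by
  ext d
  rw [mem_rightPart]
  constructor
  · rintro ⟨e, he, h1, h2, h3⟩
    rcases glue_cases hm hj1 hj2 hS1 hS2 he with ⟨_, g1, g2, _⟩ | ⟨⟨e', he', hee⟩, g0, g1, g2, g3⟩
      | ⟨rfl, hg⟩ | ⟨rfl, hg⟩
    · omega
    · have p1 : e'.1 + j = e.1 := congrArg Prod.fst hee
      have p2 : e'.2 + j = e.2 := congrArg Prod.snd hee
      have : e' = d := by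
        subst h3
        exact Prod.ext_iff.2 ⟨show e'.1 = e.1 - j by omega, show e'.2 = e.2 - j by omega⟩
      rwa [← this]
    · exfalso; simp only at h1; omega
    · exact absurd ⟨rfl, rfl⟩ h2
  · intro hd
    obtain ⟨g1, g2, g3⟩ := hS2.1 _ hd
    refine ⟨(d.1 + j, d.2 + j), mem_glue.2 (Or.inr (Or.inl ⟨d, hd, rfl⟩)), ?_, ?_, ?_⟩
    · show j ≤ d.1 + j; omega
    · show ¬(d.1 + j = j ∧ d.2 + j = m - 1)
      rintro ⟨u1, u2⟩
      exact g3 ⟨by omega, by omega⟩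
    · exact Prod.ext_iff.2 ⟨show d.1 + j - j = d.1 by omega, show d.2 + j - j = d.2 by omega⟩

end PartLemmas

/-! ## Ear bookkeeping -/

section Ears

variable {m j : ℕ} {S1 S2 T : Finset (ℕ × ℕ)}

lemma estat_shiftUp : estat (shiftUp j S2) = estat S2 := by
  unfold estat
  apply Finset.card_nbij' (fun d => (d.1 - j, d.2 - j)) (fun d => (d.1 + j, d.2 + j))
  · intro a ha
    rw [Finset.mem_coe, Finset.mem_filter] at ha ⊢
    beta_reduce
    obtain ⟨ha1, ha2⟩ := ha
    obtain ⟨e, he, hde⟩ := mem_shiftUp.1 ha1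
    have p1 : e.1 + j = a.1 := congrArg Prod.fst hde
    have p2 : e.2 + j = a.2 := congrArg Prod.snd hde
    have heq : ((a.1 - j, a.2 - j) : ℕ × ℕ) = e := Prod.ext_iff.2 ⟨by show a.1 - j = e.1; omega, by show a.2 - j = e.2; omega⟩
    rw [heq]
    exact ⟨he, by omega⟩
  · intro a ha
    rw [Finset.mem_coe, Finset.mem_filter] at ha ⊢
    refine ⟨mem_shiftUp.2 ⟨a, ha.1, rfl⟩, ?_⟩
    show a.2 + j = a.1 + j + 2
    have := ha.2
    omega
  · intro a ha
    rw [Finset.mem_coe, Finset.mem_filter] at ha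
    obtain ⟨e, he, hde⟩ := mem_shiftUp.1 ha.1
    have p1 : e.1 + j = a.1 := congrArg Prod.fst hde
    have p2 : e.2 + j = a.2 := congrArg Prod.snd hde
    exact Prod.ext_iff.2 ⟨by show a.1 - j + j = a.1; omega, by show a.2 - j + j = a.2; omega⟩
  · intro a _
    exact Prod.ext_iff.2 ⟨by show a.1 + j - j = a.1; omega, by show a.2 + j - j = a.2; omega⟩

lemma filter_rootSet (hm : 4 ≤ m) (hj1 : 1 ≤ j) (hj2 : j ≤ m - 2) :
    ((rootSet m j).filter (fun d => d.2 = d.1 + 2)).card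
      = (if j = 2 then 1 else 0) + (if j = m - 3 then 1 else 0) := by
  unfold rootSet
  rw [Finset.filter_union, Finset.card_union_of_disjoint]
  · congr 1
    · by_cases h1 : j = 1
      · subst h1; simp
      · rw [if_neg h1, Finset.filter_singleton]
        by_cases h2 : j = 2
        · rw [if_pos (show ((0:ℕ), j).2 = ((0:ℕ), j).1 + 2 by simpa using h2), if_pos h2,
            Finset.card_singleton]
        · rw [if_neg (show ¬((0:ℕ), j).2 = ((0:ℕ), j).1 + 2 by simpa using h2), if_neg h2,
            Finset.card_empty]
    · by_cases h1 : j = m - 2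
      · rw [if_pos h1, Finset.filter_empty, Finset.card_empty, if_neg (by omega)]
      · rw [if_neg h1, Finset.filter_singleton]
        by_cases h2 : j = m - 3
        · rw [if_pos (show (j, m - 1).2 = (j, m - 1).1 + 2 by show m - 1 = j + 2; omega), if_pos h2,
            Finset.card_singleton]
        · rw [if_neg (show ¬(j, m - 1).2 = (j, m - 1).1 + 2 by show ¬(m - 1 = j + 2); omega), if_neg h2,
            Finset.card_empty]
  · rw [Finset.disjoint_left]
    intro a ha hb
    rcases Finset.mem_filter.1 ha with ⟨ha', _⟩
    rcases Finset.mem_filter.1 hb with ⟨hb', _⟩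
    by_cases h1 : j = 1
    · simp [h1] at ha'
    · by_cases h2 : j = m - 2
      · simp [h2] at hb'
      · simp [h1] at ha'
        simp [h2] at hb'
        subst ha'
        have : (0 : ℕ) = j := congrArg Prod.fst hb'
        omega

lemma disj_S1_shift (hS1 : NTri (j + 1) S1) (hS2 : NTri (m - j) S2) :
    Disjoint S1 (shiftUp j S2) := by
  rw [Finset.disjoint_left]
  intro d hd1 hd2
  obtain ⟨g1, g2, _⟩ := hS1.1 _ hd1
  obtain ⟨e, he, hde⟩ := mem_shiftUp.1 hd2
  obtain ⟨k1, _, _⟩ := hS2.1 _ he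
  have p1 : e.1 + j = d.1 := congrArg Prod.fst hde
  have p2 : e.2 + j = d.2 := congrArg Prod.snd hde
  omega

lemma disj_root (hm : 4 ≤ m) (hj1 : 1 ≤ j) (hj2 : j ≤ m - 2)
    (hS1 : NTri (j + 1) S1) (hS2 : NTri (m - j) S2) :
    Disjoint (S1 ∪ shiftUp j S2) (rootSet m j) := by
  rw [Finset.disjoint_left]
  intro d hd hroot
  have hd' : d = (0, j) ∧ j ≠ 1 ∨ d = (j, m - 1) ∧ j ≠ m - 2 := by
    rcases Finset.mem_union.1 hroot with h | h
    · by_cases h1 : j = 1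
      · simp [h1] at h
      · simp [h1] at h; exact Or.inl ⟨h, h1⟩
    · by_cases h1 : j = m - 2
      · simp [h1] at h
      · simp [h1] at h; exact Or.inr ⟨h, h1⟩
  rcases Finset.mem_union.1 hd with h | h
  · obtain ⟨g1, g2, g3⟩ := hS1.1 _ h
    rcases hd' with ⟨rfl, hj⟩ | ⟨rfl, hj⟩
    · exact g3 ⟨rfl, rfl⟩
    · simp at g1 g2; omega
  · obtain ⟨e, he, hde⟩ := mem_shiftUp.1 h
    obtain ⟨k1, k2, k3⟩ := hS2.1 _ he
    have p1 : e.1 + j = d.1 := congrArg Prod.fst hde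
    have p2 : e.2 + j = d.2 := congrArg Prod.snd hde
    rcases hd' with ⟨rfl, hj⟩ | ⟨rfl, hj⟩
    · simp at p1 p2; omega
    · simp at p1 p2
      exact k3 ⟨by omega, by omega⟩

lemma estat_glue (hm : 4 ≤ m) (hj1 : 1 ≤ j) (hj2 : j ≤ m - 2)
    (hS1 : NTri (j + 1) S1) (hS2 : NTri (m - j) S2) :
    estat (glue m j S1 S2) = estat S1 + estat S2
      + ((if j = 2 then 1 else 0) + (if j = m - 3 then 1 else 0)) := by
  unfold glue
  show estat (S1 ∪ shiftUp j S2 ∪ rootSet m j) = _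
  unfold estat
  rw [Finset.filter_union,
    Finset.card_union_of_disjoint (Finset.disjoint_filter_filter
      (disj_root hm hj1 hj2 hS1 hS2)),
    Finset.filter_union,
    Finset.card_union_of_disjoint (Finset.disjoint_filter_filter
      (disj_S1_shift hS1 hS2))]
  rw [show (Finset.filter (fun d => d.2 = d.1 + 2) (shiftUp j S2)).card = estat (shiftUp j S2) from rfl,
    estat_shiftUp, filter_rootSet hm hj1 hj2]
  rfl

lemma wrapA_glue (hm : 4 ≤ m) (hj1 : 1 ≤ j) (hj2 : j ≤ m - 2)
    (hS1 : NTri (j + 1) S1) (hS2 : NTri (m - j) S2) :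
    ((0, m - 2) ∈ glue m j S1 S2) ↔ j = m - 2 := by
  constructor
  · intro h
    rcases glue_cases hm hj1 hj2 hS1 hS2 h with ⟨_, g1, g2, g3⟩ | ⟨_, g0, _⟩ | ⟨heq, _⟩ | ⟨heq, _⟩
    · simp at g1 g2 g3
      omega
    · simp at g0; omega
    · have := congrArg Prod.snd heq; simp at this; omega
    · have := congrArg Prod.fst heq; simp at this; omega
  · intro h
    subst h
    exact mem_glue.2 (Or.inr (Or.inr (Or.inl ⟨rfl, by omega⟩)))

lemma wrapB_glue (hm : 4 ≤ m) (hj1 : 1 ≤ j) (hj2 : j ≤ m - 2)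
    (hS1 : NTri (j + 1) S1) (hS2 : NTri (m - j) S2) :
    ((1, m - 1) ∈ glue m j S1 S2) ↔ j = 1 := by
  constructor
  · intro h
    rcases glue_cases hm hj1 hj2 hS1 hS2 h with ⟨_, g1, g2, g3⟩ | ⟨⟨e, he, hee⟩, g0, _⟩
      | ⟨heq, _⟩ | ⟨heq, _⟩
    · simp at g1 g2; omega
    · obtain ⟨k1, k2, k3⟩ := hS2.1 _ he
      have p1 : e.1 + j = 1 := congrArg Prod.fst hee
      have p2 : e.2 + j = m - 1 := congrArg Prod.snd hee
      have hj' : j = 1 := by omega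
      exact hj'
    · have := congrArg Prod.fst heq; simp at this
    · have := congrArg Prod.fst heq; simp at this; omega
  · intro h
    subst h
    exact mem_glue.2 (Or.inr (Or.inr (Or.inr ⟨rfl, by omega⟩)))

lemma nears_eq (hm : 4 ≤ m) (hT : ∀ d ∈ T, NDiag m d) :
    nears m T = estat T + ((if (0, m - 2) ∈ T then 1 else 0)
      + (if (1, m - 1) ∈ T then 1 else 0)) := by
  unfold nears
  have hsplit : Finset.range m = Finset.range (m - 2) ∪ {m - 2, m - 1} := by
    ext i
    simp only [Finset.mem_union, Finset.mem_range, Finset.mem_insert, Finset.mem_singleton]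
    omega
  rw [hsplit, Finset.filter_union, Finset.card_union_of_disjoint]
  · congr 1
    · -- main part equals estat
      have hcong : Finset.filter (fun i => cchord m i ∈ T) (Finset.range (m - 2))
          = Finset.filter (fun i => (i, i + 2) ∈ T) (Finset.range (m - 2)) := by
        apply Finset.filter_congr
        intro i hi
        rw [Finset.mem_range] at hi
        rw [cchord, if_pos (by omega)]
      rw [hcong]
      unfold estat
      apply Finset.card_nbij' (fun i => (i, i + 2)) (fun d => d.1)
      · intro a ha
        rw [Finset.mem_coe, Finset.mem_filter] at ha ⊢
        exact ⟨ha.2, rfl⟩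
      · intro d hd
        rw [Finset.mem_coe, Finset.mem_filter] at hd ⊢
        obtain ⟨hdT, hd2⟩ := hd
        beta_reduce
        obtain ⟨g1, g2, g3⟩ := hT _ hdT
        refine ⟨Finset.mem_range.2 (by omega), ?_⟩
        rw [show ((d.1, d.1 + 2) : ℕ × ℕ) = d from Prod.ext_iff.2 ⟨rfl, by omega⟩]
        exact hdT
      · intro a _
        rfl
      · intro d hd
        rw [Finset.mem_coe, Finset.mem_filter] at hd
        exact Prod.ext_iff.2 ⟨rfl, by have := hd.2; beta_reduce; omega⟩
    · -- the two wrap positions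
      have h1 : cchord m (m - 2) = (0, m - 2) := by
        rw [cchord, if_neg (by omega), if_pos (by omega)]
      have h2 : cchord m (m - 1) = (1, m - 1) := by
        rw [cchord, if_neg (by omega), if_neg (by omega)]
      rw [show ({m - 2, m - 1} : Finset ℕ) = insert (m - 2) {m - 1} from rfl,
        Finset.filter_insert, Finset.filter_singleton, h1, h2]
      by_cases c1 : (0, m - 2) ∈ T <;> by_cases c2 : (1, m - 1) ∈ T <;>
        simp [c1, c2, Finset.card_pair (show m - 2 ≠ m - 1 by omega)]
  · rw [Finset.disjoint_left]
    intro a ha hb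
    rw [Finset.mem_filter, Finset.mem_range] at ha
    rw [Finset.mem_filter, Finset.mem_insert, Finset.mem_singleton] at hb
    omega

end Ears

/-! ## Counting -/

section Counting

variable {m j : ℕ} {S1 S2 T : Finset (ℕ × ℕ)}

lemma isSplit_glue (hm : 4 ≤ m) (hj1 : 1 ≤ j) (hj2 : j ≤ m - 2)
    (hS1 : NTri (j + 1) S1) (hS2 : NTri (m - j) S2) : IsSplit m (glue m j S1 S2) j := by
  refine ⟨hj1, hj2, ?_, ?_⟩
  · by_cases h : j = 1
    · exact Or.inr h
    · exact Or.inl (mem_glue.2 (Or.inr (Or.inr (Or.inl ⟨rfl, h⟩))))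
  · by_cases h : j = m - 2
    · exact Or.inr h
    · exact Or.inl (mem_glue.2 (Or.inr (Or.inr (Or.inr ⟨rfl, h⟩))))

lemma nears_glue (hm : 4 ≤ m) (hj1 : 1 ≤ j) (hj2 : j ≤ m - 2)
    (hS1 : NTri (j + 1) S1) (hS2 : NTri (m - j) S2) :
    nears m (glue m j S1 S2) = estat S1 + estat S2
      + ((if j = 2 then 1 else 0) + (if j = m - 3 then 1 else 0))
      + ((if j = m - 2 then 1 else 0) + (if j = 1 then 1 else 0)) := by
  rw [nears_eq hm (glue_tri hm hj1 hj2 hS1 hS2).1, estat_glue hm hj1 hj2 hS1 hS2,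
    if_congr (wrapA_glue hm hj1 hj2 hS1 hS2) rfl rfl,
    if_congr (wrapB_glue hm hj1 hj2 hS1 hS2) rfl rfl]

lemma card_fiber (hm : 4 ≤ m) (hj1 : 1 ≤ j) (hj2 : j ≤ m - 2)
    (P : Finset (ℕ × ℕ) → Prop) [DecidablePred P] :
    ((TriF m).filter (fun T => sj m T = j ∧ P T)).card
      = ((TriF (j + 1) ×ˢ TriF (m - j)).filter (fun p => P (glue m j p.1 p.2))).card := by
  apply Finset.card_nbij' (fun T => (leftPart j T, rightPart m j T)) (fun p => glue m j p.1 p.2)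
  · intro T hT
    rw [Finset.mem_coe, Finset.mem_filter] at hT
    obtain ⟨hTF, hsj, hP⟩ := hT
    have hTri := mem_TriF.1 hTF
    have hsp : IsSplit m T j := hsj ▸ isSplit_sj hm hTri
    rw [Finset.mem_coe, Finset.mem_filter, Finset.mem_product]
    refine ⟨⟨mem_TriF.2 (left_tri hm hTri hsp), mem_TriF.2 (right_tri hm hTri hsp)⟩, ?_⟩
    show P (glue m j (leftPart j T) (rightPart m j T))
    rw [glue_parts hm hTri hsp]
    exact hP
  · intro p hp
    rw [Finset.mem_coe, Finset.mem_filter, Finset.mem_product] at hp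
    obtain ⟨⟨h1, h2⟩, hP⟩ := hp
    have hS1 := mem_TriF.1 h1
    have hS2 := mem_TriF.1 h2
    have hg := glue_tri hm hj1 hj2 hS1 hS2
    rw [Finset.mem_coe, Finset.mem_filter]
    exact ⟨mem_TriF.2 hg, sj_eq_of_isSplit hm hg (isSplit_glue hm hj1 hj2 hS1 hS2), hP⟩
  · intro T hT
    rw [Finset.mem_coe, Finset.mem_filter] at hT
    have hTri := mem_TriF.1 hT.1
    have hsp : IsSplit m T j := hT.2.1 ▸ isSplit_sj hm hTri
    exact glue_parts hm hTri hsp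
  · intro p hp
    rw [Finset.mem_coe, Finset.mem_filter, Finset.mem_product] at hp
    obtain ⟨⟨h1, h2⟩, _⟩ := hp
    exact Prod.ext_iff.2 ⟨leftPart_glue hm hj1 hj2 (mem_TriF.1 h1) (mem_TriF.1 h2),
      rightPart_glue hm hj1 hj2 (mem_TriF.1 h1) (mem_TriF.1 h2)⟩

lemma card_partition (hm : 4 ≤ m) (P : Finset (ℕ × ℕ) → Prop) [DecidablePred P] :
    ((TriF m).filter P).card
      = ∑ j ∈ Finset.Icc 1 (m - 2), ((TriF m).filter (fun T => sj m T = j ∧ P T)).card := by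
  rw [Finset.card_eq_sum_card_fiberwise (f := fun T => sj m T) (t := Finset.Icc 1 (m - 2))
    (fun T hT => by
      have hTri := mem_TriF.1 (Finset.mem_filter.1 hT).1
      have h := isSplit_sj hm hTri
      exact Finset.mem_Icc.2 ⟨h.1, h.2.1⟩)]
  apply Finset.sum_congr rfl
  intro j _
  rw [Finset.filter_filter]
  congr 1
  apply Finset.filter_congr
  intro T _
  exact and_comm

lemma card_product_filter (A B : Finset (Finset (ℕ × ℕ))) (f g : Finset (ℕ × ℕ) → ℕ) (c : ℕ) :
    ((A ×ˢ B).filter (fun p => f p.1 + g p.2 = c)).card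
      = ∑ i ∈ Finset.range (c + 1),
          (A.filter (fun a => f a = i)).card * (B.filter (fun b => g b = c - i)).card := by
  rw [Finset.card_eq_sum_card_fiberwise (f := fun p => f p.1) (t := Finset.range (c + 1))
    (fun p hp => by
      rw [Finset.mem_coe, Finset.mem_filter] at hp
      rw [Finset.mem_coe, Finset.mem_range]
      show f p.1 < c + 1
      omega)]
  apply Finset.sum_congr rfl
  intro i hi
  rw [Finset.mem_range] at hi
  rw [Finset.filter_filter]
  have heq : ((A ×ˢ B).filter (fun p => (f p.1 + g p.2 = c) ∧ f p.1 = i))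
      = (A ×ˢ B).filter (fun p => f p.1 = i ∧ g p.2 = c - i) := by
    apply Finset.filter_congr
    intro p _
    constructor
    · rintro ⟨h1, h2⟩; exact ⟨h2, by omega⟩
    · rintro ⟨h1, h2⟩; exact ⟨by omega, h1⟩
  rw [heq, ← Finset.card_product]
  congr 1
  exact Finset.filter_product (fun a => f a = i) (fun b => g b = c - i)

def w3 (s : ℕ) : ℕ := if s = 3 then 1 else 0
def ww (s : ℕ) : ℕ := if s ≤ 3 then 1 else 0

def uu (s e : ℕ) : ℕ := ((TriF s).filter (fun T => estat T + w3 s = e)).card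
def nn (s e : ℕ) : ℕ := ((TriF s).filter (fun T => estat T + ww s = e)).card
def NF (n k : ℕ) : ℕ := ((TriF n).filter (fun T => nears n T = k)).card

lemma TriF_small (h : m ≤ 3) : TriF m = {∅} := by
  ext T
  rw [mem_TriF, ntri_small h, Finset.mem_singleton]

lemma estat_empty : estat (∅ : Finset (ℕ × ℕ)) = 0 := rfl

lemma uu_two {e : ℕ} : uu 2 e = if e = 0 then 1 else 0 := by
  unfold uu
  rw [TriF_small (by norm_num), Finset.filter_singleton]
  by_cases h : e = 0
  · rw [if_pos (by simp [estat_empty, w3]; omega), if_pos h, Finset.card_singleton]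
  · rw [if_neg (by simp [estat_empty, w3]; omega), if_neg h, Finset.card_empty]

lemma uu_three {e : ℕ} : uu 3 e = if e = 1 then 1 else 0 := by
  unfold uu
  rw [TriF_small (by norm_num), Finset.filter_singleton]
  by_cases h : e = 1
  · rw [if_pos (by simp [estat_empty, w3]; omega), if_pos h, Finset.card_singleton]
  · rw [if_neg (by simp [estat_empty, w3]; omega), if_neg h, Finset.card_empty]

lemma nn_two {e : ℕ} : nn 2 e = if e = 1 then 1 else 0 := by
  unfold nn
  rw [TriF_small (by norm_num), Finset.filter_singleton]
  by_cases h : e = 1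
  · rw [if_pos (by simp [estat_empty, ww]; omega), if_pos h, Finset.card_singleton]
  · rw [if_neg (by simp [estat_empty, ww]; omega), if_neg h, Finset.card_empty]

lemma nn_three {e : ℕ} : nn 3 e = if e = 1 then 1 else 0 := by
  unfold nn
  rw [TriF_small (by norm_num), Finset.filter_singleton]
  by_cases h : e = 1
  · rw [if_pos (by simp [estat_empty, ww]; omega), if_pos h, Finset.card_singleton]
  · rw [if_neg (by simp [estat_empty, ww]; omega), if_neg h, Finset.card_empty]

lemma nn_eq_uu (h : 3 ≤ s) : nn s e = uu s e := by
  unfold nn uu ww w3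
  congr 1
  apply Finset.filter_congr
  intro T _
  by_cases h3 : s = 3
  · rw [if_pos (by omega), if_pos h3]
  · rw [if_neg (by omega), if_neg h3]

lemma uu_rec (hm : 4 ≤ m) (e : ℕ) :
    uu m e = ∑ j ∈ Finset.Icc 1 (m - 2), ∑ i ∈ Finset.range (e + 1),
      uu (j + 1) i * uu (m - j) (e - i) := by
  have h0 : uu m e = ((TriF m).filter (fun T => estat T = e)).card := by
    unfold uu w3
    congr 1
    apply Finset.filter_congr
    intro T _
    rw [if_neg (by omega)]
    omega
  rw [h0, card_partition hm]
  apply Finset.sum_congr rfl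
  intro j hj
  rw [Finset.mem_Icc] at hj
  rw [card_fiber hm hj.1 hj.2 (fun T => estat T = e)]
  have heq : ((TriF (j + 1) ×ˢ TriF (m - j)).filter (fun p => estat (glue m j p.1 p.2) = e))
      = ((TriF (j + 1) ×ˢ TriF (m - j)).filter
          (fun p => (estat p.1 + w3 (j + 1)) + (estat p.2 + w3 (m - j)) = e)) := by
    apply Finset.filter_congr
    intro p hp
    rw [Finset.mem_product] at hp
    rw [estat_glue hm hj.1 hj.2 (mem_TriF.1 hp.1) (mem_TriF.1 hp.2)]
    have e1 : w3 (j + 1) = (if j = 2 then 1 else 0) := by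
      unfold w3
      by_cases h : j = 2
      · rw [if_pos (by omega), if_pos h]
      · rw [if_neg (by omega), if_neg h]
    have e2 : w3 (m - j) = (if j = m - 3 then 1 else 0) := by
      unfold w3
      by_cases h : j = m - 3
      · rw [if_pos (by omega), if_pos h]
      · rw [if_neg (by omega), if_neg h]
    rw [e1, e2]
    generalize (if j = 2 then (1 : ℕ) else 0) = x
    generalize (if j = m - 3 then (1 : ℕ) else 0) = y
    omega
  rw [heq]
  exact card_product_filter (TriF (j + 1)) (TriF (m - j))
    (fun a => estat a + w3 (j + 1)) (fun b => estat b + w3 (m - j)) e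

lemma NF_rec (hm : 4 ≤ m) (k : ℕ) :
    NF m k = ∑ j ∈ Finset.Icc 1 (m - 2), ∑ i ∈ Finset.range (k + 1),
      nn (j + 1) i * nn (m - j) (k - i) := by
  unfold NF
  rw [card_partition hm]
  apply Finset.sum_congr rfl
  intro j hj
  rw [Finset.mem_Icc] at hj
  rw [card_fiber hm hj.1 hj.2 (fun T => nears m T = k)]
  have heq : ((TriF (j + 1) ×ˢ TriF (m - j)).filter (fun p => nears m (glue m j p.1 p.2) = k))
      = ((TriF (j + 1) ×ˢ TriF (m - j)).filter
          (fun p => (estat p.1 + ww (j + 1)) + (estat p.2 + ww (m - j)) = k)) := by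
    apply Finset.filter_congr
    intro p hp
    rw [Finset.mem_product] at hp
    rw [nears_glue hm hj.1 hj.2 (mem_TriF.1 hp.1) (mem_TriF.1 hp.2)]
    have e1 : ww (j + 1) = (if j = 2 then 1 else 0) + (if j = 1 then 1 else 0) := by
      unfold ww
      by_cases h : j = 2
      · rw [if_pos (by omega), if_pos h, if_neg (by omega)]
      · by_cases h1 : j = 1
        · rw [if_pos (by omega), if_neg h, if_pos h1]
        · rw [if_neg (by omega), if_neg h, if_neg h1]
    have e2 : ww (m - j) = (if j = m - 3 then 1 else 0) + (if j = m - 2 then 1 else 0) := by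
      unfold ww
      by_cases h : j = m - 3
      · rw [if_pos (by omega), if_pos h, if_neg (by omega)]
      · by_cases h1 : j = m - 2
        · rw [if_pos (by omega), if_neg h, if_pos h1]
        · rw [if_neg (by omega), if_neg h, if_neg h1]
    rw [e1, e2]
    generalize (if j = 2 then (1 : ℕ) else 0) = x
    generalize (if j = m - 3 then (1 : ℕ) else 0) = y
    generalize (if j = m - 2 then (1 : ℕ) else 0) = z
    generalize (if j = 1 then (1 : ℕ) else 0) = u
    omega
  rw [heq]
  exact card_product_filter (TriF (j + 1)) (TriF (m - j))
    (fun a => estat a + ww (j + 1)) (fun b => estat b + ww (m - j)) k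

end Counting

/-! ## Identities -/

lemma hockey (p : ℕ) (N : ℕ) :
    ∑ a ∈ Finset.range (N + 1), a.choose p = (N + 1).choose (p + 1) := by
  induction N with
  | zero => rcases p with _ | p <;> simp [Nat.choose]
  | succ N ih =>
    rw [Finset.sum_range_succ, ih]
    have h1 := Nat.choose_succ_succ (N + 1) p
    simp only [Nat.succ_eq_add_one] at h1
    omega

lemma sum_choose_mul (N p q : ℕ) :
    ∑ a ∈ Finset.range (N + 1), (a.choose p) * ((N - a).choose q)
      = (N + 1).choose (p + q + 1) := by
  induction N generalizing q with
  | zero => rcases p with _ | p <;> rcases q with _ | q <;> simp [Nat.choose]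
  | succ N ih =>
    rcases q with _ | q
    · have : ∀ a ∈ Finset.range (N + 2), a.choose p * ((N + 1 - a).choose 0) = a.choose p := by
        intro a _
        simp
      rw [Finset.sum_congr rfl this, hockey p (N + 1)]
    · rw [Finset.sum_range_succ, show (N + 1 - (N + 1)).choose (q + 1) = 0 by simp,
        mul_zero, add_zero]
      have hsplit : ∀ a ∈ Finset.range (N + 1), a.choose p * ((N + 1 - a).choose (q + 1))
          = a.choose p * ((N - a).choose q) + a.choose p * ((N - a).choose (q + 1)) := by
        intro a ha
        rw [Finset.mem_range] at ha
        rw [show N + 1 - a = (N - a) + 1 by omega, Nat.choose_succ_succ]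
        ring
      rw [Finset.sum_congr rfl hsplit, Finset.sum_add_distrib, ih q, ih (q + 1),
        show p + (q + 1) + 1 = (p + q + 1) + 1 by ring]
      have h1 := Nat.choose_succ_succ (N + 1) (p + q + 1)
      simp only [Nat.succ_eq_add_one] at h1
      omega

lemma cat_conv {e : ℕ} (he : 2 ≤ e) :
    ∑ i ∈ Finset.range (e + 1),
        (if i = 0 ∨ i = e then 0 else ((catalan (i - 1) : ℚ) * (catalan (e - i - 1) : ℚ)))
      = (catalan (e - 1) : ℚ) := by
  obtain ⟨f, rfl⟩ : ∃ f, e = f + 2 := ⟨e - 2, by omega⟩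
  rw [show f + 2 + 1 = (f + 2) + 1 by ring, Finset.sum_range_succ, if_pos (Or.inr rfl), add_zero,
    show f + 2 = (f + 1) + 1 by ring, Finset.sum_range_succ', if_pos (Or.inl rfl), add_zero]
  have hcong : ∀ i ∈ Finset.range (f + 1),
      (if i + 1 = 0 ∨ i + 1 = f + 1 + 1 then (0 : ℚ)
        else (catalan (i + 1 - 1) : ℚ) * (catalan (f + 1 + 1 - (i + 1) - 1) : ℚ))
      = (catalan i : ℚ) * (catalan (f - i) : ℚ) := by
    intro i hi
    rw [Finset.mem_range] at hi
    rw [if_neg (by omega), show i + 1 - 1 = i by omega,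
      show f + 1 + 1 - (i + 1) - 1 = f - i by omega]
  rw [Finset.sum_congr rfl hcong, show f + 1 + 1 - 1 = f + 1 by omega]
  have hc := catalan_succ f
  rw [Fin.sum_univ_eq_sum_range (fun i => catalan i * catalan (f - i)) f.succ] at hc
  rw [show f.succ = f + 1 from rfl] at hc
  exact_mod_cast hc.symm

def vq (s e : ℕ) : ℚ :=
  if s = 2 then (if e = 0 then 1 else 0)
  else if e = 0 then 0
  else (Nat.choose (s - 3) (2 * e - 2) : ℚ) * (catalan (e - 1) : ℚ) * 2 ^ s / 2 ^ (2 * e + 1)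

lemma vq_two (e : ℕ) : vq 2 e = if e = 0 then 1 else 0 := if_pos rfl

lemma vq_zero {s : ℕ} (hs : s ≠ 2) : vq s 0 = 0 := by
  unfold vq
  rw [if_neg hs, if_pos rfl]

lemma vq_formula {s e : ℕ} (hs : 3 ≤ s) (he : 1 ≤ e) :
    vq s e = (Nat.choose (s - 3) (2 * e - 2) : ℚ) * (catalan (e - 1) : ℚ)
      * 2 ^ s / 2 ^ (2 * e + 1) := by
  unfold vq
  rw [if_neg (by omega), if_neg (by omega)]

lemma vq_three (e : ℕ) : vq 3 e = if e = 1 then 1 else 0 := by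
  rcases Nat.eq_zero_or_pos e with h | h
  · subst h
    rw [vq_zero (by omega), if_neg (by omega)]
  · rw [vq_formula (by omega) h]
    by_cases h1 : e = 1
    · subst h1
      norm_num
    · rw [if_neg h1, show (3:ℕ) - 3 = 0 from rfl,
        Nat.choose_eq_zero_of_lt (show 0 < 2 * e - 2 by omega)]
      norm_num

lemma middle_eval {m e : ℕ} (hm : 4 ≤ m) (he : 2 ≤ e) :
    ∑ j ∈ Finset.Icc 2 (m - 3), ∑ i ∈ Finset.range (e + 1), vq (j + 1) i * vq (m - j) (e - i)
      = (Nat.choose (m - 4) (2 * e - 3) : ℚ) * (catalan (e - 1) : ℚ)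
        * 2 ^ (m + 1) / 2 ^ (2 * e + 2) := by
  rcases Nat.lt_or_ge m 5 with hm5 | hm5
  · have h4 : m = 4 := by omega
    subst h4
    rw [show (4:ℕ) - 3 = 1 from rfl, show Finset.Icc 2 1 = ∅ from rfl, Finset.sum_empty,
      show (4:ℕ) - 4 = 0 from rfl, Nat.choose_eq_zero_of_lt (show 0 < 2 * e - 3 by omega)]
    norm_num
  · have hterm : ∀ j ∈ Finset.Icc 2 (m - 3), ∀ i ∈ Finset.range (e + 1),
        vq (j + 1) i * vq (m - j) (e - i)
          = (if i = 0 ∨ i = e then 0 else ((catalan (i - 1) : ℚ) * (catalan (e - i - 1) : ℚ)))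
            * ((Nat.choose (j - 2) (2 * i - 2) * Nat.choose (m - j - 3) (2 * (e - i) - 2) : ℕ) : ℚ)
            * 2 ^ (m + 1) / 2 ^ (2 * e + 2) := by
      intro j hj i hi
      rw [Finset.mem_Icc] at hj
      rw [Finset.mem_range] at hi
      by_cases hi0 : i = 0
      · subst hi0
        rw [vq_zero (by omega), if_pos (Or.inl rfl)]
        simp
      · by_cases hie : i = e
        · subst hie
          rw [Nat.sub_self, vq_zero (by omega), if_pos (Or.inr rfl)]
          simp
        · rw [if_neg (by tauto), vq_formula (by omega) (by omega),
            vq_formula (by omega) (by omega),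
            show (j + 1) - 3 = j - 2 by omega,
            show (2:ℚ) ^ (m + 1) = 2 ^ (j + 1) * 2 ^ (m - j) by rw [← pow_add]; congr 1; omega,
            show (2:ℚ) ^ (2 * e + 2) = 2 ^ (2 * i + 1) * 2 ^ (2 * (e - i) + 1) by
              rw [← pow_add]; congr 1; omega]
          push_cast
          ring
    rw [Finset.sum_congr rfl (fun j hj => Finset.sum_congr rfl (fun i hi => hterm j hj i hi)),
      Finset.sum_comm]
    have hinner : ∀ i ∈ Finset.range (e + 1),
        (∑ j ∈ Finset.Icc 2 (m - 3),
          (if i = 0 ∨ i = e then 0 else ((catalan (i - 1) : ℚ) * (catalan (e - i - 1) : ℚ)))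
            * ((Nat.choose (j - 2) (2 * i - 2) * Nat.choose (m - j - 3) (2 * (e - i) - 2) : ℕ) : ℚ)
            * 2 ^ (m + 1) / 2 ^ (2 * e + 2))
        = (if i = 0 ∨ i = e then 0 else ((catalan (i - 1) : ℚ) * (catalan (e - i - 1) : ℚ)))
            * ((Nat.choose (m - 4) (2 * e - 3) : ℕ) : ℚ) * 2 ^ (m + 1) / 2 ^ (2 * e + 2) := by
      intro i hi
      rw [Finset.mem_range] at hi
      by_cases hg : i = 0 ∨ i = e
      · rw [if_pos hg]
        simp
      · rw [if_neg hg]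
        push_neg at hg
        have hsumN : ∑ j ∈ Finset.Icc 2 (m - 3),
            Nat.choose (j - 2) (2 * i - 2) * Nat.choose (m - j - 3) (2 * (e - i) - 2)
            = Nat.choose (m - 4) (2 * e - 3) := by
          rw [← Finset.Ico_add_one_right_eq_Icc, show m - 3 + 1 = m - 2 by omega,
            Finset.sum_Ico_eq_sum_range, show m - 2 - 2 = m - 4 by omega]
          have hc : ∀ a ∈ Finset.range (m - 4),
              Nat.choose (2 + a - 2) (2 * i - 2) * Nat.choose (m - (2 + a) - 3) (2 * (e - i) - 2)
              = Nat.choose a (2 * i - 2) * Nat.choose ((m - 5) - a) (2 * (e - i) - 2) := by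
            intro a ha
            rw [Finset.mem_range] at ha
            rw [show 2 + a - 2 = a by omega, show m - (2 + a) - 3 = m - 5 - a by omega]
          rw [Finset.sum_congr rfl hc, show m - 4 = (m - 5) + 1 by omega, sum_choose_mul]
          congr 1
          omega
        rw [← Finset.sum_div, ← Finset.sum_mul, ← Finset.mul_sum]
        congr 3
        exact_mod_cast hsumN
    rw [Finset.sum_congr rfl hinner, ← Finset.sum_div, ← Finset.sum_mul, ← Finset.sum_mul,
      cat_conv he]
    push_cast
    ring

lemma identityA {m : ℕ} (hm : 4 ≤ m) (e : ℕ) :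
    ∑ j ∈ Finset.Icc 1 (m - 2), ∑ i ∈ Finset.range (e + 1), vq (j + 1) i * vq (m - j) (e - i)
      = vq m e := by
  have hIcc : Finset.Icc 1 (m - 2) = insert 1 (insert (m - 2) (Finset.Icc 2 (m - 3))) := by
    ext x
    simp only [Finset.mem_Icc, Finset.mem_insert]
    omega
  rw [hIcc, Finset.sum_insert (by simp only [Finset.mem_insert, Finset.mem_Icc]; omega),
    Finset.sum_insert (by simp only [Finset.mem_Icc]; omega)]
  have hterm1 : ∑ i ∈ Finset.range (e + 1), vq (1 + 1) i * vq (m - 1) (e - i)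
      = vq (m - 1) e := by
    rw [Finset.sum_eq_single 0]
    · rw [show (1:ℕ) + 1 = 2 from rfl, vq_two, if_pos rfl, one_mul, Nat.sub_zero]
    · intro i hi hne
      rw [show (1:ℕ) + 1 = 2 from rfl, vq_two, if_neg hne, zero_mul]
    · intro h
      exact absurd (Finset.mem_range.2 (by omega)) h
  have hterm2 : ∑ i ∈ Finset.range (e + 1), vq (m - 2 + 1) i * vq (m - (m - 2)) (e - i)
      = vq (m - 1) e := by
    rw [show m - (m - 2) = 2 by omega, show m - 2 + 1 = m - 1 by omega,
      Finset.sum_eq_single e]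
    · rw [Nat.sub_self, vq_two, if_pos rfl, mul_one]
    · intro i hi hne
      rw [Finset.mem_range] at hi
      rw [vq_two, if_neg (by omega), mul_zero]
    · intro h
      exact absurd (Finset.mem_range.2 (by omega)) h
  rw [hterm1, hterm2]
  rcases Nat.lt_or_ge e 2 with he2 | he2
  · -- e = 0 or 1 : middle vanishes
    have hmid : ∑ j ∈ Finset.Icc 2 (m - 3), ∑ i ∈ Finset.range (e + 1),
        vq (j + 1) i * vq (m - j) (e - i) = 0 := by
      apply Finset.sum_eq_zero
      intro j hj
      rw [Finset.mem_Icc] at hj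
      apply Finset.sum_eq_zero
      intro i hi
      rw [Finset.mem_range] at hi
      rcases Nat.eq_zero_or_pos i with h0 | h0
      · subst h0
        rw [vq_zero (by omega), zero_mul]
      · rw [show e - i = 0 by omega, vq_zero (by omega), mul_zero]
    rw [hmid, add_zero]
    rcases Nat.eq_zero_or_pos e with h0 | h0
    · subst h0
      rw [vq_zero (by omega), vq_zero (by omega)]
      norm_num
    · have he1 : e = 1 := by omega
      subst he1
      rw [vq_formula (by omega) (by omega), vq_formula (by omega) (by omega)]
      rw [show (2:ℚ) ^ m = 2 ^ (m - 1) * 2 by rw [← pow_succ]; congr 1; omega]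
      rw [show m - 1 - 3 = m - 4 by omega, show m - 3 = (m - 4) + 1 by omega]
      rw [show 2 * 1 - 2 = 0 from rfl, Nat.choose_zero_right, Nat.choose_zero_right]
      ring
  · rw [middle_eval hm he2]
    rw [vq_formula (by omega) (by omega), vq_formula (by omega) (by omega),
      show m - 1 - 3 = m - 4 by omega]
    have hpascal : (Nat.choose (m - 3) (2 * e - 2) : ℚ)
        = Nat.choose (m - 4) (2 * e - 3) + Nat.choose (m - 4) (2 * e - 2) := by
      have h := Nat.choose_succ_succ (m - 4) (2 * e - 3)
      simp only [Nat.succ_eq_add_one] at h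
      rw [show m - 4 + 1 = m - 3 by omega, show 2 * e - 3 + 1 = 2 * e - 2 by omega] at h
      exact_mod_cast h
    rw [hpascal,
      show (2:ℚ) ^ m = 2 ^ (m - 1) * 2 by rw [← pow_succ]; congr 1; omega,
      show (2:ℚ) ^ (m + 1) = 2 ^ (m - 1) * 4 by
        rw [show m + 1 = (m - 1) + 2 by omega, pow_add]; norm_num,
      show (2:ℚ) ^ (2 * e + 2) = 2 ^ (2 * e + 1) * 2 by rw [pow_succ]]
    have hb : (2:ℚ) ^ (2 * e + 1) ≠ 0 := by positivity
    field_simp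
    ring

/-! ## Closed forms -/

lemma uu_eq_vq : ∀ s, 2 ≤ s → ∀ e, (uu s e : ℚ) = vq s e := by
  intro s
  induction s using Nat.strong_induction_on with
  | _ s ih =>
    intro hs e
    rcases Nat.lt_or_ge s 4 with hlt | hge
    · interval_cases s
      · rw [uu_two, vq_two]
        split <;> norm_num
      · rw [uu_three, vq_three]
        split <;> norm_num
    · rw [uu_rec hge e]
      push_cast
      have hcong : (∑ j ∈ Finset.Icc 1 (s - 2), ∑ i ∈ Finset.range (e + 1),
          ((uu (j + 1) i : ℚ) * (uu (s - j) (e - i) : ℚ)))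
          = ∑ j ∈ Finset.Icc 1 (s - 2), ∑ i ∈ Finset.range (e + 1),
            vq (j + 1) i * vq (s - j) (e - i) := by
        apply Finset.sum_congr rfl
        intro j hj
        rw [Finset.mem_Icc] at hj
        apply Finset.sum_congr rfl
        intro i _
        rw [ih (j + 1) (by omega) (by omega) i, ih (s - j) (by omega) (by omega) (e - i)]
      rw [hcong]
      exact identityA hge e

def vn (s e : ℕ) : ℚ := if s = 2 then (if e = 1 then 1 else 0) else vq s e

lemma vn_two (e : ℕ) : vn 2 e = if e = 1 then 1 else 0 := if_pos rfl

lemma vn_big {s : ℕ} (hs : s ≠ 2) (e : ℕ) : vn s e = vq s e := if_neg hs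

lemma nn_eq_vn (s : ℕ) (hs : 2 ≤ s) (e : ℕ) : (nn s e : ℚ) = vn s e := by
  rcases Nat.lt_or_ge s 3 with h | h
  · have : s = 2 := by omega
    subst this
    rw [nn_two, vn_two]
    split <;> norm_num
  · rw [nn_eq_uu h, uu_eq_vq s hs e, vn_big (by omega)]

lemma NF_eval {n k : ℕ} (hn : 4 ≤ n) (hk : 2 ≤ k) :
    (NF n k : ℚ) = 2 * vq (n - 1) (k - 1)
      + (Nat.choose (n - 4) (2 * k - 3) : ℚ) * (catalan (k - 1) : ℚ)
        * 2 ^ (n + 1) / 2 ^ (2 * k + 2) := by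
  rw [NF_rec hn k]
  push_cast
  have hcong : (∑ j ∈ Finset.Icc 1 (n - 2), ∑ i ∈ Finset.range (k + 1),
      ((nn (j + 1) i : ℚ) * (nn (n - j) (k - i) : ℚ)))
      = ∑ j ∈ Finset.Icc 1 (n - 2), ∑ i ∈ Finset.range (k + 1),
        vn (j + 1) i * vn (n - j) (k - i) := by
    apply Finset.sum_congr rfl
    intro j hj
    rw [Finset.mem_Icc] at hj
    apply Finset.sum_congr rfl
    intro i _
    rw [nn_eq_vn (j + 1) (by omega) i, nn_eq_vn (n - j) (by omega) (k - i)]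
  rw [hcong]
  have hIcc : Finset.Icc 1 (n - 2) = insert 1 (insert (n - 2) (Finset.Icc 2 (n - 3))) := by
    ext x
    simp only [Finset.mem_Icc, Finset.mem_insert]
    omega
  rw [hIcc, Finset.sum_insert (by simp only [Finset.mem_insert, Finset.mem_Icc]; omega),
    Finset.sum_insert (by simp only [Finset.mem_Icc]; omega)]
  have hterm1 : ∑ i ∈ Finset.range (k + 1), vn (1 + 1) i * vn (n - 1) (k - i)
      = vq (n - 1) (k - 1) := by
    rw [Finset.sum_eq_single 1]
    · rw [show (1:ℕ) + 1 = 2 from rfl, vn_two, if_pos rfl, one_mul, vn_big (by omega)]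
    · intro i hi hne
      rw [show (1:ℕ) + 1 = 2 from rfl, vn_two, if_neg hne, zero_mul]
    · intro h
      exact absurd (Finset.mem_range.2 (by omega)) h
  have hterm2 : ∑ i ∈ Finset.range (k + 1), vn (n - 2 + 1) i * vn (n - (n - 2)) (k - i)
      = vq (n - 1) (k - 1) := by
    rw [show n - (n - 2) = 2 by omega, show n - 2 + 1 = n - 1 by omega,
      Finset.sum_eq_single (k - 1)]
    · rw [show k - (k - 1) = 1 by omega, vn_two, if_pos rfl, mul_one, vn_big (by omega)]
    · intro i hi hne
      rw [Finset.mem_range] at hi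
      rw [vn_two, if_neg (by omega), mul_zero]
    · intro h
      exact absurd (Finset.mem_range.2 (by omega)) h
  have hmid : ∑ j ∈ Finset.Icc 2 (n - 3), ∑ i ∈ Finset.range (k + 1),
      vn (j + 1) i * vn (n - j) (k - i)
      = (Nat.choose (n - 4) (2 * k - 3) : ℚ) * (catalan (k - 1) : ℚ)
        * 2 ^ (n + 1) / 2 ^ (2 * k + 2) := by
    have hc2 : ∀ j ∈ Finset.Icc 2 (n - 3), (∑ i ∈ Finset.range (k + 1),
        vn (j + 1) i * vn (n - j) (k - i))
        = ∑ i ∈ Finset.range (k + 1), vq (j + 1) i * vq (n - j) (k - i) := by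
      intro j hj
      rw [Finset.mem_Icc] at hj
      apply Finset.sum_congr rfl
      intro i _
      rw [vn_big (by omega), vn_big (by omega)]
    rw [Finset.sum_congr rfl hc2]
    exact middle_eval hn hk
  rw [hterm1, hterm2, hmid]
  ring

lemma final_algebra {n k : ℕ} (hk : 2 ≤ k) (hkn : 2 * k ≤ n) :
    2 * vq (n - 1) (k - 1)
      + (Nat.choose (n - 4) (2 * k - 3) : ℚ) * (catalan (k - 1) : ℚ)
        * 2 ^ (n + 1) / 2 ^ (2 * k + 2)
    = (n : ℚ) / k * Nat.choose (n - 4) (2 * k - 4)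
        * ((Nat.choose (2 * (k - 2)) (k - 2) : ℚ) / ((k : ℚ) - 1)) * 2 ^ (n - 2 * k) := by
  have hn : 4 ≤ n := by omega
  have hk0 : (k : ℚ) ≠ 0 := by positivity
  have hk2 : (2 : ℚ) ≤ (k : ℚ) := by exact_mod_cast hk
  have hk1 : (k : ℚ) - 1 ≠ 0 := by linarith
  have hk3 : (2 * (k : ℚ) - 3) ≠ 0 := by linarith
  have h1 := succ_mul_catalan_eq_centralBinom (k - 2)
  rw [Nat.centralBinom_eq_two_mul_choose] at h1
  have e1 : (catalan (k - 2) : ℚ) = (Nat.choose (2 * (k - 2)) (k - 2) : ℚ) / ((k : ℚ) - 1) := by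
    have h1' : ((k - 2 + 1 : ℕ) : ℚ) * (catalan (k - 2) : ℚ)
        = (Nat.choose (2 * (k - 2)) (k - 2) : ℚ) := by exact_mod_cast h1
    have hcast : ((k - 2 + 1 : ℕ) : ℚ) = (k : ℚ) - 1 := by
      push_cast [Nat.cast_sub (show 2 ≤ k from hk)]
      ring
    rw [hcast] at h1'
    field_simp
    linarith [h1']
  have h2 := succ_mul_catalan_eq_centralBinom (k - 1)
  have h3 := Nat.succ_mul_centralBinom_succ (k - 2)
  rw [show k - 2 + 1 = k - 1 by omega] at h3
  have e2 : (catalan (k - 1) : ℚ)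
      = 2 * (2 * (k : ℚ) - 3) * (Nat.choose (2 * (k - 2)) (k - 2) : ℚ)
        / (((k : ℚ) - 1) * (k : ℚ)) := by
    have h2' : ((k - 1 + 1 : ℕ) : ℚ) * (catalan (k - 1) : ℚ) = ((k - 1).centralBinom : ℚ) := by
      exact_mod_cast h2
    have h3' : ((k - 1 : ℕ) : ℚ) * ((k - 1).centralBinom : ℚ)
        = 2 * ((2 * (k - 2) + 1 : ℕ) : ℚ) * ((k - 2).centralBinom : ℚ) := by
      exact_mod_cast h3
    have hc1 : ((k - 1 + 1 : ℕ) : ℚ) = (k : ℚ) := by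
      push_cast [Nat.cast_sub (show 1 ≤ k by omega)]
      ring
    have hc2 : ((k - 1 : ℕ) : ℚ) = (k : ℚ) - 1 := by
      push_cast [Nat.cast_sub (show 1 ≤ k by omega)]
      ring
    have hc3 : ((2 * (k - 2) + 1 : ℕ) : ℚ) = 2 * (k : ℚ) - 3 := by
      push_cast [Nat.cast_sub (show 2 ≤ k from hk)]
      ring
    have hc4 : ((k - 2).centralBinom : ℚ) = (Nat.choose (2 * (k - 2)) (k - 2) : ℚ) := by
      rw [Nat.centralBinom_eq_two_mul_choose]
    rw [hc1] at h2'
    rw [hc2, hc3, hc4] at h3'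
    field_simp
    nlinarith [h2', h3']
  have h4 := Nat.choose_succ_right_eq (n - 4) (2 * k - 4)
  rw [show 2 * k - 4 + 1 = 2 * k - 3 by omega, show n - 4 - (2 * k - 4) = n - 2 * k by omega]
    at h4
  have e3 : (Nat.choose (n - 4) (2 * k - 3) : ℚ) * (2 * (k : ℚ) - 3)
      = (Nat.choose (n - 4) (2 * k - 4) : ℚ) * ((n : ℚ) - 2 * k) := by
    have h4' : (Nat.choose (n - 4) (2 * k - 3) : ℚ) * ((2 * k - 3 : ℕ) : ℚ)
        = (Nat.choose (n - 4) (2 * k - 4) : ℚ) * ((n - 2 * k : ℕ) : ℚ) := by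
      exact_mod_cast h4
    have hc5 : ((2 * k - 3 : ℕ) : ℚ) = 2 * (k : ℚ) - 3 := by
      push_cast [Nat.cast_sub (show 3 ≤ 2 * k by omega)]
      ring
    have hc6 : ((n - 2 * k : ℕ) : ℚ) = (n : ℚ) - 2 * k := by
      push_cast [Nat.cast_sub hkn]
      ring
    rw [hc5, hc6] at h4'
    exact h4'
  have hp1 : (2:ℚ) ^ (n - 1) = 2 ^ (n - 2 * k) * 2 ^ (2 * k - 1) := by
    rw [← pow_add]
    congr 1
    omega
  have hp2 : (2:ℚ) ^ (n + 1) = 2 ^ (n - 2 * k) * 2 ^ (2 * k + 1) := by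
    rw [← pow_add]
    congr 1
    omega
  have hp3 : (2:ℚ) ^ (2 * (k - 1) + 1) = 2 ^ (2 * k - 1) := by
    congr 1
    omega
  rw [vq_formula (show 3 ≤ n - 1 by omega) (show 1 ≤ k - 1 by omega),
    show n - 1 - 3 = n - 4 by omega, show 2 * (k - 1) - 2 = 2 * k - 4 by omega,
    show k - 1 - 1 = k - 2 by omega, hp3, hp1, hp2, e1, e2]
  have hQ1 : (2:ℚ) ^ (2 * k - 1) ≠ 0 := by positivity
  have hQ2 : (2:ℚ) ^ (2 * k + 1) ≠ 0 := by positivity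
  have hQ3 : (2:ℚ) ^ (2 * k + 2) ≠ 0 := by positivity
  have hQ4 : (2:ℚ) ^ (n - 2 * k) ≠ 0 := by positivity
  have hp4 : (2:ℚ) ^ (2 * k + 2) = 2 ^ (2 * k + 1) * 2 := by rw [pow_succ]
  have e3' : (Nat.choose (n - 4) (2 * k - 3) : ℚ)
      = (Nat.choose (n - 4) (2 * k - 4) : ℚ) * ((n : ℚ) - 2 * k) / (2 * (k : ℚ) - 3) := by
    rw [eq_div_iff hk3]
    exact e3
  rw [hp4, e3']
  field_simp
  ring

/-! ## Transfer from Fin to ℕ -/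

section Transfer

variable {n : ℕ}

def encf (d : Fin n × Fin n) : ℕ × ℕ := (d.1.1, d.2.1)

def enc (T : Finset (Fin n × Fin n)) : Finset (ℕ × ℕ) := T.image encf

lemma encf_inj : Function.Injective (encf (n := n)) := by
  intro a b h
  have h1 : a.1.1 = b.1.1 := congrArg Prod.fst h
  have h2 : a.2.1 = b.2.1 := congrArg Prod.snd h
  exact Prod.ext_iff.2 ⟨Fin.val_injective h1, Fin.val_injective h2⟩

lemma mem_enc_iff {T : Finset (Fin n × Fin n)} {d : Fin n × Fin n} :
    encf d ∈ enc T ↔ d ∈ T := by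
  unfold enc
  constructor
  · intro h
    obtain ⟨e, he, hee⟩ := Finset.mem_image.1 h
    rwa [← encf_inj hee]
  · exact fun h => Finset.mem_image_of_mem _ h

lemma cross_iff {d e : Fin n × Fin n} : Crosses d e ↔ NCross (encf d) (encf e) := by
  simp only [Crosses, NCross, Fin.lt_def, encf]

lemma diag_iff {d : Fin n × Fin n} : IsDiag d ↔ NDiag n (encf d) := by
  simp only [IsDiag, NDiag, encf]
  constructor
  · intro ⟨h1, h2⟩
    exact ⟨h1, d.2.isLt, h2⟩
  · intro ⟨h1, h2, h3⟩
    exact ⟨h1, h3⟩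

lemma ntri_enc {T : Finset (Fin n × Fin n)} (hT : IsTriangulation T) : NTri n (enc T) := by
  obtain ⟨h1, h2, h3⟩ := hT
  refine ⟨?_, ?_, ?_⟩
  · intro d hd
    obtain ⟨e, he, hee⟩ := Finset.mem_image.1 hd
    rw [← hee]
    exact diag_iff.1 (h1 e he)
  · intro d hd e he
    obtain ⟨d', hd', hdd⟩ := Finset.mem_image.1 hd
    obtain ⟨e', he', hee⟩ := Finset.mem_image.1 he
    rw [← hdd, ← hee]
    intro hc
    exact h2 d' hd' e' he' (cross_iff.2 hc)
  · intro d hd hdn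
    obtain ⟨g1, g2, g3⟩ := hd
    have hlt1 : d.1 < n := by omega
    set dF : Fin n × Fin n := (⟨d.1, hlt1⟩, ⟨d.2, g2⟩) with hdF
    have hfd : encf dF = d := rfl
    have hdiag : IsDiag dF := diag_iff.2 (by rw [hfd]; exact ⟨g1, g2, g3⟩)
    have hnotin : dF ∉ T := by
      intro hc
      exact hdn (by rw [← hfd]; exact mem_enc_iff.2 hc)
    obtain ⟨e, he, hce⟩ := h3 dF hdiag hnotin
    exact ⟨encf e, mem_enc_iff.2 he, by rw [← hfd]; exact cross_iff.1 hce⟩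

lemma istri_of_enc {T : Finset (Fin n × Fin n)} (h : NTri n (enc T)) : IsTriangulation T := by
  obtain ⟨h1, h2, h3⟩ := h
  refine ⟨?_, ?_, ?_⟩
  · intro d hd
    exact diag_iff.2 (h1 _ (mem_enc_iff.2 hd))
  · intro d hd e he hc
    exact h2 _ (mem_enc_iff.2 hd) _ (mem_enc_iff.2 he) (cross_iff.1 hc)
  · intro d hd hdn
    obtain ⟨e, he, hce⟩ := h3 (encf d) (diag_iff.1 hd) (fun hc => hdn (mem_enc_iff.1 hc))
    obtain ⟨e', he', hee⟩ := Finset.mem_image.1 he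
    refine ⟨e', he', cross_iff.2 ?_⟩
    rwa [hee]

lemma encf_earDiag (hn : 4 ≤ n) (i : Fin n) : encf (earDiag i) = cchord n i.1 := by
  have hrot : (rotTwo i).1 = (i.1 + 2) % n := rfl
  rcases Nat.lt_or_ge (i.1 + 2) n with h1 | h1
  · have hv : (rotTwo i).1 = i.1 + 2 := by rw [hrot, Nat.mod_eq_of_lt h1]
    rw [earDiag, if_pos (by rw [Fin.lt_def, hv]; omega)]
    rw [cchord, if_pos h1]
    unfold encf
    rw [Prod.ext_iff]
    exact ⟨rfl, hv⟩
  · have hi2 : i.1 < n := i.isLt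
    rcases Nat.eq_or_lt_of_le h1 with h2 | h2
    · -- i.1 + 2 = n
      have hv : (rotTwo i).1 = 0 := by rw [hrot, ← h2, Nat.mod_self]
      rw [earDiag, if_neg (by rw [Fin.lt_def, hv]; omega)]
      rw [cchord, if_neg (by omega), if_pos (by omega)]
      unfold encf
      rw [Prod.ext_iff]
      exact ⟨hv, rfl⟩
    · -- i.1 = n - 1
      have hv : (rotTwo i).1 = 1 := by
        rw [hrot, show i.1 + 2 = n + 1 by omega, Nat.add_mod_left, Nat.mod_eq_of_lt (by omega)]
      rw [earDiag, if_neg (by rw [Fin.lt_def, hv]; omega)]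
      rw [cchord, if_neg (by omega), if_neg (by omega)]
      unfold encf
      rw [Prod.ext_iff]
      exact ⟨hv, rfl⟩

lemma ears_eq_nears (hn : 4 ≤ n) (T : Finset (Fin n × Fin n)) :
    ears T = nears n (enc T) := by
  unfold ears nears
  apply Finset.card_nbij (fun i => i.1)
  · intro i hi
    rw [Finset.mem_coe, Finset.mem_filter] at hi ⊢
    refine ⟨Finset.mem_range.2 i.isLt, ?_⟩
    rw [← encf_earDiag hn i]
    exact mem_enc_iff.2 hi.2
  · intro a _ b _ h
    exact Fin.val_injective h
  · intro a ha
    simp only [Finset.coe_filter, Set.mem_setOf_eq, Finset.mem_range] at ha ⊢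
    obtain ⟨ha1, ha2⟩ := ha
    refine ⟨⟨a, ha1⟩, ⟨Finset.mem_univ _, ?_⟩, rfl⟩
    rw [← mem_enc_iff, encf_earDiag hn ⟨a, ha1⟩]
    exact ha2

lemma card_transfer (hn : 4 ≤ n) (k : ℕ) :
    Nat.card {T : Finset (Fin n × Fin n) // IsTriangulation T ∧ ears T = k} = NF n k := by
  classical
  rw [Nat.card_eq_fintype_card, Fintype.card_subtype]
  unfold NF
  apply Finset.card_nbij (fun T => enc T)
  · intro T hT
    rw [Finset.mem_coe, Finset.mem_filter] at hT ⊢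
    obtain ⟨_, hT1, hT2⟩ := hT
    exact ⟨mem_TriF.2 (ntri_enc hT1), by rw [← ears_eq_nears hn, hT2]⟩
  · intro a _ b _ h
    apply Finset.image_injective encf_inj
    exact h
  · intro S hS
    simp only [Finset.coe_filter, Set.mem_setOf_eq] at hS ⊢
    obtain ⟨hS1, hS2⟩ := hS
    have hNT := mem_TriF.1 hS1
    set T : Finset (Fin n × Fin n) := Finset.univ.filter (fun d => encf d ∈ S) with hTdef
    have hET : enc T = S := by
      ext a
      unfold enc
      rw [Finset.mem_image]
      constructor
      · rintro ⟨d, hd, rfl⟩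
        rw [hTdef, Finset.mem_filter] at hd
        exact hd.2
      · intro ha
        obtain ⟨g1, g2, g3⟩ := hNT.1 _ ha
        refine ⟨(⟨a.1, by omega⟩, ⟨a.2, g2⟩), ?_, rfl⟩
        rw [hTdef, Finset.mem_filter]
        exact ⟨Finset.mem_univ _, ha⟩
    refine ⟨T, ⟨Finset.mem_univ _, ?_, ?_⟩, hET⟩
    · exact istri_of_enc (by rw [hET]; exact hNT)
    · rw [ears_eq_nears hn, hET, hS2]

end Transfer

/-- The number of triangulations of a regular `n`-gon with exactly `k` ears equals
`(n/k)·binom(n-4, 2k-4)·Cat(k-2)·2^(n-2k)` for `2 ≤ k ≤ n/2`,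
where `Cat(m) = binom(2m,m)/(m+1)`. -/
theorem card_triangulations_with_ears (n k : ℕ) (hk : 2 ≤ k) (hkn : 2 * k ≤ n) :
    (Nat.card {T : Finset (Fin n × Fin n) // IsTriangulation T ∧ ears T = k} : ℚ)
    = (n : ℚ) / k * Nat.choose (n - 4) (2 * k - 4)
        * ((Nat.choose (2 * (k - 2)) (k - 2) : ℚ) / ((k : ℚ) - 1)) * 2 ^ (n - 2 * k) := by
  have hn : 4 ≤ n := by omega
  rw [card_transfer hn k, NF_eval hn hk, final_algebra hk hkn]
end

section
/- For a nonnegative integer n and parameters a, c (with appropriate nonvanishing assumptions), the identity Σ_{k≥0} (−a·q^n)^k · q^{−binom(k,2)} · (q^{−n};q)_k / (q;q)_k · ₂φ₁(c·q^k/(a·q), q^{−k}; c; q, q) = (ac;q)_n / (c;q)_n holds, where ₂φ₁ is the basic hypergeometric series. -/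
open Finset

/-- The q-Pochhammer symbol `(a;q)_m = (1-a)(1-aq)⋯(1-aq^(m-1))`. -/
def qPoch {K : Type*} [Field K] (q a : K) (m : ℕ) : K :=
  ∏ i ∈ Finset.range m, (1 - a * q ^ i)

/-- The terminating basic hypergeometric series `₂φ₁(a, b; c; q, z)`, summed over `m` from `0`
to `N`; when `b = q^(-N)` this is the full (terminating) series. -/
def phi21 {K : Type*} [Field K] (q a b c z : K) (N : ℕ) : K :=
  ∑ m ∈ Finset.range (N + 1),
    qPoch q a m * qPoch q b m / (qPoch q c m * qPoch q q m) * z ^ m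

section Aux

variable {K : Type*} [Field K]

/-- Auxiliary product `∏_{i<m} (x - q^i)`. -/
def EE (q x : K) (m : ℕ) : K := ∏ i ∈ Finset.range m, (x - q ^ i)

lemma EE_zero (q x : K) : EE q x 0 = 1 := by simp [EE]

lemma EE_succ (q x : K) (m : ℕ) : EE q x (m + 1) = EE q x m * (x - q ^ m) :=
  Finset.prod_range_succ _ _

lemma qPoch_zero' (q a : K) : qPoch q a 0 = 1 := by simp [qPoch]

lemma qPoch_succ (q a : K) (m : ℕ) : qPoch q a (m + 1) = qPoch q a m * (1 - a * q ^ m) :=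
  Finset.prod_range_succ _ _

lemma EE_pow_eq_zero (q : K) (k m : ℕ) (h : k < m) : EE q (q ^ k) m = 0 :=
  Finset.prod_eq_zero (Finset.mem_range.2 h) (by simp)

lemma EE_rel (q : K) (k m : ℕ) :
    EE q (q ^ (k + 1)) m * (q ^ (k + 1) - q ^ m)
      = (q ^ (k + 1) - 1) * (q ^ m * EE q (q ^ k) m) := by
  have h1 := EE_succ q (q ^ (k + 1)) m
  have h2 : EE q (q ^ (k + 1)) (m + 1)
      = (∏ i ∈ Finset.range m, (q ^ (k + 1) - q ^ (i + 1))) * (q ^ (k + 1) - q ^ 0) :=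
    Finset.prod_range_succ' _ _
  have h3 : (∏ i ∈ Finset.range m, (q ^ (k + 1) - q ^ (i + 1)))
      = q ^ m * EE q (q ^ k) m := by
    have hcg : ∀ i ∈ Finset.range m, q ^ (k + 1) - q ^ (i + 1) = q * (q ^ k - q ^ i) := by
      intro i _; ring
    rw [Finset.prod_congr rfl hcg, Finset.prod_mul_distrib, Finset.prod_const,
      Finset.card_range, EE]
  have h4 := h1.symm.trans h2
  rw [h3, pow_zero] at h4
  linear_combination h4

lemma qPoch_q_ne_zero (q : K) (hq1 : ∀ i : ℕ, q ^ (i + 1) ≠ 1) (m : ℕ) :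
    qPoch q q m ≠ 0 := by
  rw [qPoch]
  apply Finset.prod_ne_zero_iff.2
  intro i _
  have : q * q ^ i = q ^ (i + 1) := by ring
  rw [this]
  exact sub_ne_zero_of_ne (Ne.symm (hq1 i))

lemma qPoch_c_ne_zero (q c : K) (hc : ∀ j : ℕ, c * q ^ j ≠ 1) (m : ℕ) :
    qPoch q c m ≠ 0 := by
  rw [qPoch]
  apply Finset.prod_ne_zero_iff.2
  intro i _
  exact sub_ne_zero_of_ne (Ne.symm (hc i))

set_option maxHeartbeats 1600000 in
/-- Abstract telescoping step for `CV1`. -/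
lemma key1 (q b c N X W B E1 C Q : K) (hq : q ≠ 0) (hX : X ≠ 0) (hN : N ≠ 0)
    (hW : W ≠ 0) (hCne : C ≠ 0) (hQne : Q ≠ 0) (h1 : 1 - c * X ≠ 0) (h2 : 1 - q * X ≠ 0)
    (hcN : 1 - c * N ≠ 0) (hN1 : N * q - 1 ≠ 0) :
    B * E1 * X / (W * X * (C * Q))
      = (b - c * N) / (1 - c * N) *
          (B * (E1 * (N * q - X) / ((N * q - 1) * X)) * X / (W * (C * Q)))
        + (N * (1 - X * q) * (q - c * (X * q)) * (B * (1 - b * X)) * (E1 * (N * q - X)) /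
              ((1 - c * N) * (N * q - 1) * (X * q) *
                (W * N * (C * (1 - c * X) * (Q * (1 - q * X)))))
          - N * (1 - X) * (q - c * X) * B * E1 /
              ((1 - c * N) * (N * q - 1) * X * (W * (C * Q)))) := by
  have hD1 : (1 - c * N) * ((N * q - 1) * X) * (W * (C * Q)) ≠ 0 :=
    mul_ne_zero (mul_ne_zero hcN (mul_ne_zero hN1 hX))
      (mul_ne_zero hW (mul_ne_zero hCne hQne))
  have hD2 : (1 - c * N) * (N * q - 1) * (X * q) *
      (W * N * (C * (1 - c * X) * (Q * (1 - q * X)))) ≠ 0 :=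
    mul_ne_zero (mul_ne_zero (mul_ne_zero hcN hN1) (mul_ne_zero hX hq))
      (mul_ne_zero (mul_ne_zero hW hN)
        (mul_ne_zero (mul_ne_zero hCne h1) (mul_ne_zero hQne h2)))
  have hD3 : (1 - c * N) * (N * q - 1) * X * (W * (C * Q)) ≠ 0 :=
    mul_ne_zero (mul_ne_zero (mul_ne_zero hcN hN1) hX)
      (mul_ne_zero hW (mul_ne_zero hCne hQne))
  have hDL : W * X * (C * Q) ≠ 0 :=
    mul_ne_zero (mul_ne_zero hW hX) (mul_ne_zero hCne hQne)
  have hT1 : (b - c * N) / (1 - c * N) *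
        (B * (E1 * (N * q - X) / ((N * q - 1) * X)) * X / (W * (C * Q)))
      = (b - c * N) * (B * (E1 * (N * q - X)) * X) /
          ((1 - c * N) * ((N * q - 1) * X) * (W * (C * Q))) := by
    simp only [← mul_div_assoc, div_mul_eq_mul_div, div_div, div_mul_div_comm]
    congr 1
    ring
  rw [hT1, div_sub_div _ _ hD2 hD3, div_add_div _ _ hD1 (mul_ne_zero hD2 hD3),
    div_eq_div_iff hDL (mul_ne_zero hD1 (mul_ne_zero hD2 hD3))]
  ring

set_option maxHeartbeats 1600000 in
/-- Abstract telescoping step for `CV2`. -/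
lemma key2 (q a c N X Z P E1 C Q : K) (hq : q ≠ 0) (hX : X ≠ 0)
    (hCne : C ≠ 0) (hQne : Q ≠ 0) (h1 : 1 - c * X ≠ 0) (h2 : 1 - q * X ≠ 0)
    (hcN : 1 - c * N ≠ 0) (hN1 : N * q - 1 ≠ 0) :
    P * E1 * Z / (C * Q)
      = (1 - a * c * N) / (1 - c * N) *
          (P * (E1 * (N * q - X) / ((N * q - 1) * X)) * Z / (C * Q))
        + (N * (1 - X * q) * (q - c * (X * q)) * (P * (a - X)) * (E1 * (N * q - X)) * (Z * c) /
              ((1 - c * N) * (N * q - 1) * (X * q) * (C * (1 - c * X) * (Q * (1 - q * X))))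
          - N * (1 - X) * (q - c * X) * P * E1 * Z /
              ((1 - c * N) * (N * q - 1) * X * (C * Q))) := by
  have hD1 : (1 - c * N) * ((N * q - 1) * X) * (C * Q) ≠ 0 :=
    mul_ne_zero (mul_ne_zero hcN (mul_ne_zero hN1 hX)) (mul_ne_zero hCne hQne)
  have hD2 : (1 - c * N) * (N * q - 1) * (X * q) *
      (C * (1 - c * X) * (Q * (1 - q * X))) ≠ 0 :=
    mul_ne_zero (mul_ne_zero (mul_ne_zero hcN hN1) (mul_ne_zero hX hq))
      (mul_ne_zero (mul_ne_zero hCne h1) (mul_ne_zero hQne h2))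
  have hD3 : (1 - c * N) * (N * q - 1) * X * (C * Q) ≠ 0 :=
    mul_ne_zero (mul_ne_zero (mul_ne_zero hcN hN1) hX) (mul_ne_zero hCne hQne)
  have hDL : C * Q ≠ 0 := mul_ne_zero hCne hQne
  have hT1 : (1 - a * c * N) / (1 - c * N) *
        (P * (E1 * (N * q - X) / ((N * q - 1) * X)) * Z / (C * Q))
      = (1 - a * c * N) * (P * (E1 * (N * q - X)) * Z) /
          ((1 - c * N) * ((N * q - 1) * X) * (C * Q)) := by
    simp only [← mul_div_assoc, div_mul_eq_mul_div, div_div, div_mul_div_comm]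
    congr 1
    ring
  rw [hT1, div_sub_div _ _ hD2 hD3, div_add_div _ _ hD1 (mul_ne_zero hD2 hD3),
    div_eq_div_iff hDL (mul_ne_zero hD1 (mul_ne_zero hD2 hD3))]
  ring

set_option maxHeartbeats 1600000 in
/-- q-Chu–Vandermonde, `z = q` form. -/
lemma CV1 (q b c : K) (hq0 : q ≠ 0) (hq1 : ∀ i : ℕ, q ^ (i + 1) ≠ 1)
    (hc : ∀ j : ℕ, c * q ^ j ≠ 1) (k : ℕ) :
    ∑ m ∈ Finset.range (k + 1),
        qPoch q b m * EE q (q ^ k) m * q ^ m /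
          (q ^ (k * m) * (qPoch q c m * qPoch q q m))
      = (∏ i ∈ Finset.range k, (b - c * q ^ i)) / qPoch q c k := by
  induction k with
  | zero => simp [EE, qPoch]
  | succ k ih =>
    have hC := qPoch_c_ne_zero q c hc
    have hQ := qPoch_q_ne_zero q hq1
    have hck : (1 : K) - c * q ^ k ≠ 0 := sub_ne_zero_of_ne (Ne.symm (hc k))
    have hqk1 : (q : K) ^ (k + 1) - 1 ≠ 0 := sub_ne_zero_of_ne (hq1 k)
    set g : ℕ → K := fun m =>
      q ^ k * (1 - q ^ m) * (q - c * q ^ m) * qPoch q b m * EE q (q ^ (k + 1)) m /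
        ((1 - c * q ^ k) * (q ^ (k + 1) - 1) * q ^ m *
          (q ^ (k * m) * (qPoch q c m * qPoch q q m))) with hg
    have key : ∀ m : ℕ,
        qPoch q b m * EE q (q ^ (k + 1)) m * q ^ m /
            (q ^ ((k + 1) * m) * (qPoch q c m * qPoch q q m))
          = (b - c * q ^ k) / (1 - c * q ^ k) *
              (qPoch q b m * EE q (q ^ k) m * q ^ m /
                (q ^ (k * m) * (qPoch q c m * qPoch q q m)))
            + (g (m + 1) - g m) := by
      intro m
      have h1 : (1 : K) - c * q ^ m ≠ 0 := sub_ne_zero_of_ne (Ne.symm (hc m))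
      have h2 : (1 : K) - q * q ^ m ≠ 0 := by
        have h := hq1 m
        rw [show (q : K) ^ (m + 1) = q * q ^ m by ring] at h
        exact sub_ne_zero_of_ne (Ne.symm h)
      have hqm : (q : K) ^ m ≠ 0 := pow_ne_zero _ hq0
      have hqkm : (q : K) ^ (k * m) ≠ 0 := pow_ne_zero _ hq0
      have e1 : (q : K) ^ ((k + 1) * m) = q ^ (k * m) * q ^ m := by
        rw [add_mul, one_mul, pow_add]
      have e2 : (q : K) ^ (k * (m + 1)) = q ^ (k * m) * q ^ k := by
        rw [mul_add, mul_one, pow_add]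
      have hqk1' : (q : K) ^ k * q - 1 ≠ 0 := by
        rw [← pow_succ]; exact hqk1
      have hrel' := EE_rel q k m
      simp only [pow_succ] at hrel'
      have hEn : EE q (q ^ k) m
          = EE q (q ^ k * q) m * (q ^ k * q - q ^ m) / ((q ^ k * q - 1) * q ^ m) := by
        rw [eq_div_iff (mul_ne_zero hqk1' hqm)]
        linear_combination hrel'.symm
      rw [hg]
      simp only [EE_succ, qPoch_succ, e1, e2]
      simp only [pow_succ]
      rw [hEn]
      exact key1 q b c (q ^ k) (q ^ m) (q ^ (k * m)) (qPoch q b m) (EE q (q ^ k * q) m)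
        (qPoch q c m) (qPoch q q m) hq0 hqm (pow_ne_zero _ hq0) hqkm
        (hC m) (hQ m) h1 h2 hck hqk1' 
    have hsum : ∑ m ∈ Finset.range (k + 2),
        qPoch q b m * EE q (q ^ (k + 1)) m * q ^ m /
          (q ^ ((k + 1) * m) * (qPoch q c m * qPoch q q m))
        = (b - c * q ^ k) / (1 - c * q ^ k) *
            ∑ m ∈ Finset.range (k + 2),
              qPoch q b m * EE q (q ^ k) m * q ^ m /
                (q ^ (k * m) * (qPoch q c m * qPoch q q m))
          + (g (k + 2) - g 0) := by
      rw [Finset.mul_sum, ← Finset.sum_range_sub g, ← Finset.sum_add_distrib]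
      exact Finset.sum_congr rfl fun m _ => key m
    have hg0 : g 0 = 0 := by simp [hg]
    have hgtop : g (k + 2) = 0 := by
      rw [hg]
      simp only [EE_pow_eq_zero q (k + 1) (k + 2) (by omega)]
      simp
    have hext : ∑ m ∈ Finset.range (k + 2),
        qPoch q b m * EE q (q ^ k) m * q ^ m /
          (q ^ (k * m) * (qPoch q c m * qPoch q q m))
        = ∑ m ∈ Finset.range (k + 1),
            qPoch q b m * EE q (q ^ k) m * q ^ m /
              (q ^ (k * m) * (qPoch q c m * qPoch q q m)) := by
      rw [Finset.sum_range_succ, EE_pow_eq_zero q k (k + 1) (by omega)]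
      simp
    rw [hsum, hg0, hgtop, hext, ih, Finset.prod_range_succ, qPoch_succ]
    field_simp
    ring

set_option maxHeartbeats 1600000 in
/-- q-Chu–Vandermonde, second form. -/
lemma CV2 (q a c : K) (hq0 : q ≠ 0) (hq1 : ∀ i : ℕ, q ^ (i + 1) ≠ 1)
    (hc : ∀ j : ℕ, c * q ^ j ≠ 1) (n : ℕ) :
    ∑ m ∈ Finset.range (n + 1),
        EE q a m * EE q (q ^ n) m * c ^ m / (qPoch q c m * qPoch q q m)
      = qPoch q (a * c) n / qPoch q c n := by
  induction n with
  | zero => simp [EE, qPoch]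
  | succ n ih =>
    have hC := qPoch_c_ne_zero q c hc
    have hQ := qPoch_q_ne_zero q hq1
    have hcn : (1 : K) - c * q ^ n ≠ 0 := sub_ne_zero_of_ne (Ne.symm (hc n))
    have hqn1 : (q : K) ^ (n + 1) - 1 ≠ 0 := sub_ne_zero_of_ne (hq1 n)
    set g : ℕ → K := fun m =>
      q ^ n * (1 - q ^ m) * (q - c * q ^ m) * EE q a m * EE q (q ^ (n + 1)) m * c ^ m /
        ((1 - c * q ^ n) * (q ^ (n + 1) - 1) * q ^ m * (qPoch q c m * qPoch q q m)) with hg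
    have key : ∀ m : ℕ,
        EE q a m * EE q (q ^ (n + 1)) m * c ^ m / (qPoch q c m * qPoch q q m)
          = (1 - a * c * q ^ n) / (1 - c * q ^ n) *
              (EE q a m * EE q (q ^ n) m * c ^ m / (qPoch q c m * qPoch q q m))
            + (g (m + 1) - g m) := by
      intro m
      have h1 : (1 : K) - c * q ^ m ≠ 0 := sub_ne_zero_of_ne (Ne.symm (hc m))
      have h2 : (1 : K) - q * q ^ m ≠ 0 := by
        have h := hq1 m
        rw [show (q : K) ^ (m + 1) = q * q ^ m by ring] at h
        exact sub_ne_zero_of_ne (Ne.symm h)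
      have hqm : (q : K) ^ m ≠ 0 := pow_ne_zero _ hq0
      have hqn1' : (q : K) ^ n * q - 1 ≠ 0 := by
        rw [← pow_succ]; exact hqn1
      have hrel' := EE_rel q n m
      simp only [pow_succ] at hrel'
      have hEn : EE q (q ^ n) m
          = EE q (q ^ n * q) m * (q ^ n * q - q ^ m) / ((q ^ n * q - 1) * q ^ m) := by
        rw [eq_div_iff (mul_ne_zero hqn1' hqm)]
        linear_combination hrel'.symm
      rw [hg]
      simp only [EE_succ, qPoch_succ]
      simp only [pow_succ]
      rw [hEn]
      exact key2 q a c (q ^ n) (q ^ m) (c ^ m) (EE q a m) (EE q (q ^ n * q) m)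
        (qPoch q c m) (qPoch q q m) hq0 hqm
        (hC m) (hQ m) h1 h2 hcn hqn1' 
    have hsum : ∑ m ∈ Finset.range (n + 2),
        EE q a m * EE q (q ^ (n + 1)) m * c ^ m / (qPoch q c m * qPoch q q m)
        = (1 - a * c * q ^ n) / (1 - c * q ^ n) *
            ∑ m ∈ Finset.range (n + 2),
              EE q a m * EE q (q ^ n) m * c ^ m / (qPoch q c m * qPoch q q m)
          + (g (n + 2) - g 0) := by
      rw [Finset.mul_sum, ← Finset.sum_range_sub g, ← Finset.sum_add_distrib]
      exact Finset.sum_congr rfl fun m _ => key m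
    have hg0 : g 0 = 0 := by simp [hg]
    have hgtop : g (n + 2) = 0 := by
      rw [hg]
      simp only [EE_pow_eq_zero q (n + 1) (n + 2) (by omega)]
      simp
    have hext : ∑ m ∈ Finset.range (n + 2),
        EE q a m * EE q (q ^ n) m * c ^ m / (qPoch q c m * qPoch q q m)
        = ∑ m ∈ Finset.range (n + 1),
            EE q a m * EE q (q ^ n) m * c ^ m / (qPoch q c m * qPoch q q m) := by
      rw [Finset.sum_range_succ, EE_pow_eq_zero q n (n + 1) (by omega)]
      simp
    rw [hsum, hg0, hgtop, hext, ih, qPoch_succ, qPoch_succ]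
    field_simp
    ring

lemma qPoch_zpow_neg (q : K) (hq0 : q ≠ 0) (k m : ℕ) :
    qPoch q ((q : K) ^ (-(k : ℤ))) m = EE q (q ^ k) m / q ^ (k * m) := by
  rw [qPoch, EE,
    show (q : K) ^ (k * m) = ∏ _i ∈ Finset.range m, q ^ k by
      rw [Finset.prod_const, Finset.card_range, ← pow_mul],
    ← Finset.prod_div_distrib]
  apply Finset.prod_congr rfl
  intro i _
  have hk : (q : K) ^ k ≠ 0 := pow_ne_zero _ hq0
  rw [zpow_neg, zpow_natCast]
  field_simp

end Aux

/-- For a nonnegative integer `n` and parameters `a`, `c` with the appropriate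
nonvanishing assumptions,
`Σ_{k≥0} (-a q^n)^k q^(-binom(k,2)) (q^(-n);q)_k/(q;q)_k · ₂φ₁(c q^k/(aq), q^(-k); c; q, q)
  = (ac;q)_n/(c;q)_n`.
The summand vanishes for `k > n`, so the sum ranges over `0 ≤ k ≤ n`. -/
theorem qChuVandermonde_double_sum {K : Type*} [Field K] (q a c : K) (n : ℕ)
    (ha : a ≠ 0) (hq0 : q ≠ 0) (hq1 : ∀ i : ℕ, q ^ (i + 1) ≠ 1)
    (hc : ∀ j : ℕ, c * q ^ j ≠ 1) :
    ∑ k ∈ Finset.range (n + 1),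
        (-(a * q ^ n)) ^ k * q ^ (-(Nat.choose k 2 : ℤ))
          * qPoch q (q ^ (-(n : ℤ))) k / qPoch q q k
          * phi21 q (c * q ^ k / (a * q)) (q ^ (-(k : ℤ))) c q k
    = qPoch q (a * c) n / qPoch q c n := by
  rw [← CV2 q a c hq0 hq1 hc n]
  apply Finset.sum_congr rfl
  intro k _
  -- Step A: evaluate the inner ₂φ₁ by CV1
  have hphi : phi21 q (c * q ^ k / (a * q)) (q ^ (-(k : ℤ))) c q k
      = (∏ i ∈ Finset.range k, (c * q ^ k / (a * q) - c * q ^ i)) / qPoch q c k := by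
    rw [phi21, ← CV1 q (c * q ^ k / (a * q)) c hq0 hq1 hc k]
    apply Finset.sum_congr rfl
    intro m _
    rw [qPoch_zpow_neg q hq0]
    have hqkm : (q : K) ^ (k * m) ≠ 0 := pow_ne_zero _ hq0
    field_simp
  -- Step B: rewrite the inner product
  have hprod : (∏ i ∈ Finset.range k, (c * q ^ k / (a * q) - c * q ^ i))
      = (-1) ^ k * c ^ k * q ^ (Nat.choose k 2) / a ^ k * EE q a k := by
    rw [← Finset.prod_range_reflect]
    have hcg : ∀ j ∈ Finset.range k,
        c * q ^ k / (a * q) - c * q ^ (k - 1 - j)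
          = (c * q ^ (k - 1 - j) / a) * (q ^ j - a) := by
      intro j hj
      rw [Finset.mem_range] at hj
      obtain ⟨t, rfl⟩ : ∃ t, k = j + t + 1 := ⟨k - j - 1, by omega⟩
      rw [show j + t + 1 - 1 - j = t by omega]
      field_simp
      ring
    rw [Finset.prod_congr rfl hcg, Finset.prod_mul_distrib]
    have hA : (∏ j ∈ Finset.range k, (c * q ^ (k - 1 - j) / a))
        = c ^ k * q ^ (Nat.choose k 2) / a ^ k := by
      have : ∀ j ∈ Finset.range k,
          c * q ^ (k - 1 - j) / a = c / a * q ^ (k - 1 - j) := by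
        intro j _; ring
      rw [Finset.prod_congr rfl this, Finset.prod_mul_distrib, Finset.prod_const,
        Finset.card_range, Finset.prod_pow_eq_pow_sum,
        Finset.sum_range_reflect (fun i => i) k]
      simp only [Finset.sum_range_id, Nat.choose_two_right]
      field_simp
      rw [div_pow, div_mul_cancel₀ _ (pow_ne_zero _ ha)]
    have hB : (∏ j ∈ Finset.range k, (q ^ j - a)) = (-1) ^ k * EE q a k := by
      have : ∀ j ∈ Finset.range k, (q : K) ^ j - a = (-1) * (a - q ^ j) := by
        intro j _; ring
      rw [Finset.prod_congr rfl this, Finset.prod_mul_distrib, Finset.prod_const,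
        Finset.card_range, EE]
    rw [hA, hB]
    ring
  -- Step C: assemble
  rw [hphi, hprod, qPoch_zpow_neg q hq0,
    show (q : K) ^ (-(Nat.choose k 2 : ℤ)) = (q ^ Nat.choose k 2)⁻¹ by
      rw [zpow_neg, zpow_natCast],
    show (-(a * q ^ n)) ^ k = (-1) ^ k * a ^ k * q ^ (n * k) by
      rw [neg_pow, mul_pow, ← pow_mul]; ring]
  have hQk := qPoch_q_ne_zero q hq1 k
  have hCk := qPoch_c_ne_zero q c hc k
  have h1 : (q : K) ^ (n * k) ≠ 0 := pow_ne_zero _ hq0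
  have h2 : (q : K) ^ Nat.choose k 2 ≠ 0 := pow_ne_zero _ hq0
  have hak : a ^ k ≠ 0 := pow_ne_zero _ ha
  have hneg : ((-1 : K)) ^ k * ((-1 : K)) ^ k = 1 := by
    rw [← mul_pow]; simp
  field_simp
  linear_combination (EE q (q ^ n) k * c ^ k * EE q a k) * hneg
end

section
/- For nonnegative integers d, the identity Σ_{i=0}^{⌊d/2⌋} binom(d,i)·binom(d−i,i)·2^{d−2i} = binom(2d,d) holds. -/
open Polynomial Finset

lemma coeff_two_X_add_one (m k : ℕ) :
    ((C 2 * X + 1 : ℕ[X]) ^ m).coeff k = 2 ^ k * m.choose k := by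
  rw [add_pow]
  simp only [one_pow, mul_one, mul_pow, ← C_pow, finset_sum_coeff, coeff_C_mul, coeff_mul_C,
    coeff_X_pow]
  rw [Finset.sum_eq_single k]
  · rw [← C_eq_natCast, coeff_mul_C, coeff_C_mul,
      coeff_X_pow]
    simp [mul_comm]
  · intro j hj hne
    rw [← C_eq_natCast, coeff_mul_C, coeff_C_mul,
      coeff_X_pow, if_neg (Ne.symm hne)]
    ring
  · intro hk
    simp only [Finset.mem_range, not_lt] at hk
    simp [Nat.choose_eq_zero_of_lt hk]

lemma key (d : ℕ) :
    ∑ i ∈ Finset.range (d + 1), Nat.choose d i * Nat.choose (d - i) i * 2 ^ (d - 2 * i)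
    = Nat.choose (2 * d) d := by
  have h : ((X + 1 : ℕ[X]) ^ (2 * d)).coeff d
      = ((((X : ℕ[X]) ^ 2) + (C 2 * X + 1)) ^ d).coeff d := by
    congr 1
    rw [pow_mul]
    congr 1
    rw [show (C 2 : ℕ[X]) = 2 by simp]
    ring
  rw [coeff_X_add_one_pow, Nat.cast_id] at h
  rw [add_pow] at h
  simp only [finset_sum_coeff, ← pow_mul] at h
  rw [h]
  apply Finset.sum_congr rfl
  intro i hi
  symm
  rw [mem_range, Nat.lt_succ_iff] at hi
  rw [show ((d.choose i : ℕ[X])) = C (d.choose i) from (C_eq_natCast _).symm,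
      mul_assoc, mul_comm ((X : ℕ[X]) ^ (2 * i)), coeff_mul_X_pow']
  by_cases h2 : 2 * i ≤ d
  · rw [if_pos h2, coeff_mul_C, coeff_two_X_add_one]
    have hle : i ≤ d - i := by omega
    have : d - 2 * i = (d - i) - i := by omega
    rw [this, Nat.choose_symm hle]
    ring
  · rw [if_neg h2]
    have : Nat.choose (d - i) i = 0 := Nat.choose_eq_zero_of_lt (by omega)
    simp [this]

/-- For nonnegative integers `d`,
`Σ_{i=0}^{⌊d/2⌋} binom(d,i)·binom(d-i,i)·2^(d-2i) = binom(2d,d)`. -/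
theorem sum_choose_choose_two_pow (d : ℕ) :
    ∑ i ∈ Finset.range (d / 2 + 1), Nat.choose d i * Nat.choose (d - i) i * 2 ^ (d - 2 * i)
    = Nat.choose (2 * d) d := by
  rw [← key d]
  apply Finset.sum_subset
  · exact Finset.range_subset_range.2 (by omega)
  · intro i hi hni
    rw [mem_range, Nat.lt_succ_iff] at *
    push_neg at hni
    have : Nat.choose (d - i) i = 0 := Nat.choose_eq_zero_of_lt (by omega)
    simp [this]
end
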